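/- arXiv:1103.1719 — 8 statements merged into one kernel-verified Lean document; each statement's English description precedes it below -/
import Mathlib

section
/- Let E be a URI-set and set E_n = E ∩ {1,...,n}. Then |E_n| / ln n → 1 almost surely as n → ∞. -/
open MeasureTheory ProbabilityTheory Filter
open Topology

/-!
Let `S n = ∑_{i ≤ n} 1_{E i}`. Then `𝔼 (S n)` is the harmonic number `H n`, and by independence
`Var (S n) ≤ H n`. Along `n_k = 2 ^ k ^ 2` we have `H n_k ≥ k² log 2`, so
`∑_k 𝔼 [((S n_k - H n_k) / H n_k)²] ≤ ∑_k 1 / H n_k < ∞`, which forces `S n_k / H n_k → 1`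
almost surely. Since `H n ~ log n` and `log n_(k+1) / log n_k → 1`, the monotonicity of `S`
fills the gaps between consecutive `n_k`.
-/

lemma StrictMono.exists_le_lt_succ {n : ℕ → ℕ} (hn : StrictMono n) {m : ℕ} (hm : n 0 ≤ m) :
    ∃ k, n k ≤ m ∧ m < n (k + 1) := by
  classical
  have hex : ∃ j, m < n j := ⟨m + 1, (Nat.lt_succ_self m).trans_le (hn.id_le _)⟩
  have hpos : Nat.find hex ≠ 0 := fun h => (Nat.find_spec hex).not_ge (h ▸ hm)
  refine ⟨Nat.find hex - 1, not_lt.1 (Nat.find_min hex (by omega)), ?_⟩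
  rw [Nat.sub_add_cancel (Nat.one_le_iff_ne_zero.2 hpos)]
  exact Nat.find_spec hex

theorem tendsto_div_of_monotone_of_tendsto_div_subseq {s a : ℕ → ℝ} {n : ℕ → ℕ} {l : ℝ}
    (hs : Monotone s) (hs0 : 0 ≤ s) (ha : Monotone a) (ha0 : ∀ᶠ m in atTop, 0 < a m)
    (hn : StrictMono n) (hratio : Tendsto (fun k => a (n (k + 1)) / a (n k)) atTop (𝓝 1))
    (hsub : Tendsto (fun k => s (n k) / a (n k)) atTop (𝓝 l)) :
    Tendsto (fun m => s m / a m) atTop (𝓝 l) := by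
  have hbracket : ∀ m, ∃ k, n 0 ≤ m → n k ≤ m ∧ m < n (k + 1) := fun m =>
    if hm : n 0 ≤ m then (hn.exists_le_lt_succ hm).imp fun _ h _ => h else ⟨0, (absurd · hm)⟩
  choose κ hκ using hbracket
  have hκ_tendsto : Tendsto κ atTop atTop := tendsto_atTop_atTop.2 fun K =>
    ⟨n K, fun m hm => Nat.lt_succ_iff.1 (hn.lt_iff_lt.1
      (hm.trans_lt (hκ m ((hn.monotone (Nat.zero_le K)).trans hm)).2))⟩
  have ha_sub : ∀ᶠ m in atTop, 0 < a (n (κ m)) :=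
    hκ_tendsto.eventually (hn.tendsto_atTop.eventually ha0)
  have hlower : Tendsto (fun m => s (n (κ m)) / a (n (κ m)) * (a (n (κ m)) / a (n (κ m + 1))))
      atTop (𝓝 l) := by
    simpa using (hsub.comp hκ_tendsto).mul ((hratio.comp hκ_tendsto).inv₀ one_ne_zero)
  have hupper : Tendsto (fun m => s (n (κ m + 1)) / a (n (κ m + 1)) *
      (a (n (κ m + 1)) / a (n (κ m)))) atTop (𝓝 l) := by
    simpa using ((hsub.comp (tendsto_add_atTop_nat 1)).comp hκ_tendsto).mul
      (hratio.comp hκ_tendsto)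
  refine tendsto_of_tendsto_of_tendsto_of_le_of_le' hlower hupper ?_ ?_ <;>
  filter_upwards [eventually_ge_atTop (n 0), ha0, ha_sub] with m hm ham hanm <;>
  obtain ⟨hlo, hhi⟩ := hκ m hm
  · rw [div_mul_div_cancel₀ hanm.ne']
    exact div_le_div₀ (hs0 m) (hs hlo) ham (ha hhi.le)
  · rw [div_mul_div_cancel₀ (hanm.trans_le (ha (hn.monotone (Nat.le_succ _)))).ne']
    exact div_le_div₀ (hs0 _) (hs hhi.le) hanm (ha hlo)

theorem ae_tendsto_zero_of_summable_integral_sq {Ω : Type*} [MeasurableSpace Ω] {μ : Measure Ω}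
    {Y : ℕ → Ω → ℝ} (hY : ∀ k, MemLp (Y k) 2 μ)
    (hsum : Summable fun k => ∫ ω, Y k ω ^ 2 ∂μ) :
    ∀ᵐ ω ∂μ, Tendsto (fun k => Y k ω) atTop (𝓝 0) := by
  have hnorm : ∀ k, eLpNorm (fun ω => Y k ω ^ 2) 1 μ = ENNReal.ofReal (∫ ω, Y k ω ^ 2 ∂μ) := by
    intro k
    rw [eLpNorm_one_eq_lintegral_enorm, ofReal_integral_eq_lintegral_ofReal (hY k).integrable_sq
      (ae_of_all _ fun ω => sq_nonneg _)]
    simp only [Real.enorm_of_nonneg (sq_nonneg _)]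
  have hfinite : ∑' k, eLpNorm (fun ω => Y k ω ^ 2) 1 μ ≠ ⊤ := by
    simp only [hnorm]
    rw [← ENNReal.ofReal_tsum_of_nonneg (fun k => integral_nonneg fun ω => sq_nonneg _) hsum]
    exact ENNReal.ofReal_ne_top
  filter_upwards [summable_norm_of_tsum_eLpNorm_ne_top le_rfl
    (fun k => (hY k).integrable_sq.aestronglyMeasurable) hfinite] with ω hω
  have hsq : Tendsto (fun k => Y k ω ^ 2) atTop (𝓝 0) :=
    tendsto_zero_iff_norm_tendsto_zero.2 hω.tendsto_atTop_zero
  rw [tendsto_zero_iff_abs_tendsto_zero]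
  simpa [Function.comp_def, Real.sqrt_sq_eq_abs] using (Real.continuous_sqrt.tendsto 0).comp hsq

theorem integral_sum_indicator_sub_sq_le {Ω ι : Type*} [MeasurableSpace Ω] {μ : Measure Ω}
    [IsProbabilityMeasure μ] {A : ι → Set Ω} (hA : ∀ i, MeasurableSet (A i))
    (hind : iIndepSet A μ) (s : Finset ι) :
    ∫ ω, (∑ i ∈ s, (A i).indicator (fun _ => (1 : ℝ)) ω - ∑ i ∈ s, μ.real (A i)) ^ 2 ∂μ
      ≤ ∑ i ∈ s, μ.real (A i) := by
  set X : ι → Ω → ℝ := fun i => (A i).indicator fun _ => 1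
  have hX : ∀ i, MemLp (X i) 2 μ := fun i =>
    memLp_indicator_const 2 (hA i) 1 (Or.inr (measure_ne_top _ _))
  have hmean : μ[∑ i ∈ s, X i] = ∑ i ∈ s, μ.real (A i) := by
    simp only [Finset.sum_apply]
    rw [integral_finsetSum _ fun i _ => (hX i).integrable one_le_two]
    exact Finset.sum_congr rfl fun i _ => integral_indicator_one (hA i)
  calc _ = Var[∑ i ∈ s, X i; μ] := by
        rw [variance_eq_integral (memLp_finsetSum' s fun i _ => hX i).aemeasurable, hmean]
        simp [X, Finset.sum_apply]
    _ = ∑ i ∈ s, Var[X i; μ] :=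
        IndepFun.variance_sum (fun i _ => hX i)
          fun i _ j _ hij => hind.iIndepFun_indicator.indepFun hij
    _ ≤ ∑ i ∈ s, μ.real (A i) := by
        refine Finset.sum_le_sum fun i _ => ?_
        refine (variance_le_expectation_sq (hX i).aestronglyMeasurable).trans_eq ?_
        have : X i ^ 2 = X i := by
          ext ω; by_cases h : ω ∈ A i <;> simp [X, h]
        rw [this]
        exact integral_indicator_one (hA i)

theorem tendsto_harmonic_div_log :
    Tendsto (fun n : ℕ => (harmonic n : ℝ) / Real.log n) atTop (𝓝 1) := by
  have hlog : Tendsto (fun n : ℕ => Real.log n) atTop atTop :=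
    Real.tendsto_log_atTop.comp tendsto_natCast_atTop_atTop
  have h := (Real.tendsto_harmonic_sub_log.div_atTop hlog).const_add 1
  rw [add_zero] at h
  refine h.congr' ?_
  filter_upwards [hlog.eventually_gt_atTop 0] with n hn
  field_simp
  ring

lemma log_two_pow_sq (k : ℕ) : Real.log ((2 ^ k ^ 2 : ℕ) : ℝ) = k ^ 2 * Real.log 2 := by
  push_cast
  rw [Real.log_pow]
  push_cast
  ring

lemma tendsto_log_two_pow_sq_ratio :
    Tendsto (fun k : ℕ => Real.log ((2 ^ (k + 1) ^ 2 : ℕ) : ℝ) / Real.log ((2 ^ k ^ 2 : ℕ) : ℝ))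
      atTop (𝓝 1) := by
  have h : Tendsto (fun k : ℕ => (1 + (k : ℝ)⁻¹) ^ 2) atTop (𝓝 1) := by
    simpa using
      ((tendsto_inv_atTop_zero.comp (tendsto_natCast_atTop_atTop (R := ℝ))).const_add 1).pow 2
  refine h.congr' ?_
  filter_upwards [eventually_ge_atTop 1] with k hk
  have hk : (k : ℝ) ≠ 0 := by positivity
  simp only [log_two_pow_sq]
  push_cast
  field_simp

lemma summable_inv_harmonic_two_pow_sq :
    Summable fun k : ℕ => ((harmonic (2 ^ k ^ 2) : ℝ))⁻¹ := by
  refine Summable.of_norm_bounded_eventually_nat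
    ((Real.summable_nat_pow_inv.2 one_lt_two).mul_left (Real.log 2)⁻¹) ?_
  filter_upwards [eventually_ge_atTop 1] with k hk
  have hpos : 0 < (k : ℝ) ^ 2 * Real.log 2 := by
    have := Real.log_pos one_lt_two
    positivity
  have hle : (k : ℝ) ^ 2 * Real.log 2 ≤ harmonic (2 ^ k ^ 2) := by
    rw [← log_two_pow_sq]
    refine le_trans (Real.log_le_log (by positivity) ?_) (log_add_one_le_harmonic _)
    push_cast
    linarith
  rw [Real.norm_of_nonneg (inv_nonneg.2 (hpos.trans_le hle).le), ← mul_inv, mul_comm]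
  exact inv_anti₀ hpos hle

section URISet

variable {Ω : Type*} [MeasurableSpace Ω] {μ : Measure Ω} {E : ℕ → Set Ω}

lemma sum_measureReal_Icc_eq_harmonic (hprob : ∀ n : ℕ, 1 ≤ n → μ (E n) = 1 / n) (n : ℕ) :
    ∑ i ∈ Finset.Icc 1 n, μ.real (E i) = harmonic n := by
  rw [harmonic_eq_sum_Icc]
  push_cast
  refine Finset.sum_congr rfl fun i hi => ?_
  simp [measureReal_def, hprob i (Finset.mem_Icc.1 hi).1, ENNReal.toReal_inv]

theorem ae_tendsto_sum_indicator_div_harmonic_two_pow_sq [IsProbabilityMeasure μ]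
    (hmeas : ∀ n, MeasurableSet (E n)) (hind : iIndepSet E μ)
    (hprob : ∀ n : ℕ, 1 ≤ n → μ (E n) = 1 / n) :
    ∀ᵐ ω ∂μ, Tendsto (fun k : ℕ => (∑ i ∈ Finset.Icc 1 (2 ^ k ^ 2),
      (E i).indicator (fun _ => (1 : ℝ)) ω) / harmonic (2 ^ k ^ 2)) atTop (𝓝 1) := by
  set S : ℕ → Ω → ℝ := fun n ω => ∑ i ∈ Finset.Icc 1 n, (E i).indicator (fun _ => 1) ω
  set H : ℕ → ℝ := fun k => harmonic (2 ^ k ^ 2)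
  have hH : ∀ k, 0 < H k := fun k => Rat.cast_pos.2 (harmonic_pos (by positivity))
  have hS : ∀ n, MemLp (S n) 2 μ := fun n => memLp_finsetSum _ fun i _ =>
    memLp_indicator_const 2 (hmeas i) 1 (Or.inr (measure_ne_top _ _))
  have hsecond : ∀ k, ∫ ω, ((S (2 ^ k ^ 2) ω - H k) / H k) ^ 2 ∂μ ≤ (H k)⁻¹ := by
    intro k
    have h := integral_sum_indicator_sub_sq_le hmeas hind (Finset.Icc 1 (2 ^ k ^ 2))
    rw [sum_measureReal_Icc_eq_harmonic hprob] at h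
    simp only [div_pow, integral_div]
    rw [div_le_iff₀ (pow_pos (hH k) 2)]
    calc _ ≤ H k := h
      _ = (H k)⁻¹ * H k ^ 2 := by field_simp [(hH k).ne']
  have hdev := ae_tendsto_zero_of_summable_integral_sq
    (Y := fun k ω => (S (2 ^ k ^ 2) ω - H k) / H k)
    (fun k => by simpa only [div_eq_mul_inv, Pi.sub_apply] using
      ((hS _).sub (memLp_const (H k))).mul_const (H k)⁻¹)
    (summable_inv_harmonic_two_pow_sq.of_nonneg_of_le
      (fun k => integral_nonneg fun ω => sq_nonneg _) hsecond)
  filter_upwards [hdev] with ω hω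
  have h := hω.const_add 1
  rw [add_zero] at h
  refine h.congr fun k => ?_
  rw [one_add_div (hH k).ne', add_sub_cancel]

end URISet

theorem stmt1_general {Ω : Type*} [MeasurableSpace Ω] (μ : Measure Ω) [IsProbabilityMeasure μ]
    (E : ℕ → Set Ω) (hmeas : ∀ n, MeasurableSet (E n))
    (hind : iIndepSet E μ)
    (hprob : ∀ n : ℕ, 1 ≤ n → μ (E n) = 1 / n) :
    ∀ᵐ ω ∂μ, Tendsto
      (fun n : ℕ => (∑ i ∈ Finset.Icc 1 n, Set.indicator (E i) (fun _ => (1 : ℝ)) ω)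
        / Real.log n)
      atTop (nhds 1) := by
  have hn : StrictMono fun k : ℕ => 2 ^ k ^ 2 := fun a b h =>
    Nat.pow_lt_pow_right one_lt_two (Nat.pow_lt_pow_left h two_ne_zero)
  have hlog_mono : Monotone fun n : ℕ => Real.log n := fun a b hab => by
    rcases Nat.eq_zero_or_pos a with rfl | ha
    · simpa using Real.log_natCast_nonneg b
    · exact Real.log_le_log (by exact_mod_cast ha) (by exact_mod_cast hab)
  filter_upwards [ae_tendsto_sum_indicator_div_harmonic_two_pow_sq hmeas hind hprob] with ω hω
  have hsub := hω.mul (tendsto_harmonic_div_log.comp hn.tendsto_atTop)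
  rw [one_mul] at hsub
  refine tendsto_div_of_monotone_of_tendsto_div_subseq
    (fun a b hab => Finset.sum_le_sum_of_subset_of_nonneg (Finset.Icc_subset_Icc le_rfl hab)
      fun i _ _ => Set.indicator_nonneg (fun _ _ => zero_le_one) ω)
    (fun m => Finset.sum_nonneg fun i _ => Set.indicator_nonneg (fun _ _ => zero_le_one) ω)
    hlog_mono ?_ hn tendsto_log_two_pow_sq_ratio (hsub.congr fun k => ?_)
  · filter_upwards [eventually_ge_atTop 2] with m hm
    exact Real.log_pos (by exact_mod_cast hm)
  · exact div_mul_div_cancel₀ (Rat.cast_ne_zero.2 (harmonic_pos (by positivity)).ne')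

/-- For a URI-set `E`, the cardinality of `E ∩ {1,…,n}` (written as a sum of
indicators) divided by `ln n` converges to `1` almost surely. -/
theorem stmt1 {Ω : Type*} [MeasurableSpace Ω] (μ : Measure Ω) [IsProbabilityMeasure μ]
    (E : ℕ → Set Ω) (hmeas : ∀ n, MeasurableSet (E n))
    (hind : iIndepSet E μ)
    (hprob : ∀ n : ℕ, 1 ≤ n → μ (E n) = 1 / n)
    (hzero : E 0 = ∅) :
    ∀ᵐ ω ∂μ, Tendsto
      (fun n : ℕ => (∑ i ∈ Finset.Icc 1 n, Set.indicator (E i) (fun _ => (1 : ℝ)) ω)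
        / Real.log n)
      atTop (nhds 1) :=
  stmt1_general μ E hmeas hind hprob
end

section
/- Let E be a URI-set and A ⊆ ℤ_+. If A has natural density α, i.e. (1/n) ∑_{j=1}^n 1_A(j) → α, then A has URI-density α: almost surely, (1/n) ∑_{k=1}^n 1_A(N_k) → α, where N_1 < N_2 < ... are the elements of E. -/
/-!
Let `H n = ∑_{j<n} 1/j`. The counts `#(E ∩ [0, n))` and `#(E ∩ A ∩ [0, n))` are sums of
independent indicators with means `H n` and `∑_{j<n} 1_A(j)/j ~ α H n` (natural density implies
logarithmic density, by summation by parts) and with variances at most `H n`. Chebyshev's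
inequality and Borel–Cantelli give almost sure convergence of both counts divided by `H n` along a
sparse sequence `n_k` with `H (n_k) ≈ k⁴`, and monotonicity interpolates between consecutive `n_k`
because `H (n_{k+1}) / H (n_k) → 1`. So the ratio of the two counts tends to `α`; evaluated at the
successive elements of `E`, this ratio is the average in the theorem.
-/

open MeasureTheory ProbabilityTheory Filter Finset Topology Asymptotics

-- `(0 : ℝ)⁻¹ = 0`, so this sum is the harmonic number `H_{n-1}`.
theorem tendsto_sum_range_inv_natCast_atTop :
    Tendsto (fun n => ∑ j ∈ range n, (j : ℝ)⁻¹) atTop atTop := by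
  rw [← tendsto_add_atTop_iff_nat 1]
  refine Real.tendsto_sum_range_one_div_nat_succ_atTop.congr fun n => ?_
  simp [sum_range_succ']

theorem sum_range_succ_div_natCast_eq (e : ℕ → ℝ) (n : ℕ) :
    ∑ j ∈ range (n + 1), e j / j = (∑ i ∈ Icc 1 n, e i) / n
      + ∑ j ∈ range n, (∑ i ∈ Icc 1 j, e i) / j * (1 / ((j : ℝ) + 1)) := by
  induction n with
  | zero => simp
  | succ n ih =>
    set C := ∑ i ∈ Icc 1 n, e i
    have hC : C / n * n = C := div_mul_cancel_of_imp fun h => by simp [C, by exact_mod_cast h]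
    rw [sum_range_succ, ih, sum_range_succ, sum_Icc_succ_top (by omega)]
    push_cast
    field_simp
    linear_combination hC

theorem tendsto_logarithmic_mean_of_tendsto_mean {a : ℕ → ℝ} {α : ℝ}
    (h : Tendsto (fun n : ℕ => (∑ j ∈ Icc 1 n, a j) / n) atTop (𝓝 α)) :
    Tendsto (fun n => (∑ j ∈ range n, a j / j) / ∑ j ∈ range n, (j : ℝ)⁻¹) atTop (𝓝 α) := by
  set H : ℕ → ℝ := fun n => ∑ j ∈ range n, 1 / ((j : ℝ) + 1)
  have hHtop : Tendsto H atTop atTop := Real.tendsto_sum_range_one_div_nat_succ_atTop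
  set C : ℕ → ℝ := fun n => ∑ j ∈ Icc 1 n, (a j - α)
  have hC : (fun n : ℕ => C n / n) =o[atTop] fun _ => (1 : ℝ) := by
    refine (isLittleO_one_iff ℝ).2 ((tendsto_sub_nhds_zero_iff.2 h).congr' ?_)
    filter_upwards [eventually_ne_atTop 0] with n hn
    simp [C, sum_sub_distrib, sub_div, hn]
  have hsum : (fun n => ∑ j ∈ range n, C j / j * (1 / ((j : ℝ) + 1))) =o[atTop] H := by
    refine IsLittleO.sum_range ?_ (fun j => by positivity) hHtop
    simpa using hC.mul_isBigO (isBigO_refl (fun j : ℕ => 1 / ((j : ℝ) + 1)) atTop)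
  have hrem : (fun n : ℕ => C n / n) =o[atTop] H :=
    hC.trans ((isLittleO_one_left_iff ℝ).2 (tendsto_norm_atTop_atTop.comp hHtop))
  have hdev := ((hrem.add hsum).congr_left fun n =>
    (sum_range_succ_div_natCast_eq _ n).symm).tendsto_div_nhds_zero.add_const α
  rw [zero_add] at hdev
  rw [← tendsto_add_atTop_iff_nat 1]
  refine hdev.congr' ?_
  have hH : ∀ n, ∑ j ∈ range (n + 1), (j : ℝ)⁻¹ = H n := by simp [H, sum_range_succ']
  filter_upwards [hHtop.eventually_gt_atTop 0] with n hn
  rw [← hH] at hn ⊢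
  have hnum : ∑ j ∈ range (n + 1), (a j - α) / j
      = ∑ j ∈ range (n + 1), a j / j - α * ∑ j ∈ range (n + 1), (j : ℝ)⁻¹ := by
    simp only [div_eq_mul_inv, sub_mul, sum_sub_distrib, mul_sum]
  rw [hnum, sub_div, mul_div_assoc, div_self hn.ne']
  ring

theorem exists_strictMono_mem_Ico {W t : ℕ → ℝ} (hW : Monotone W)
    (hstep : ∀ n, W (n + 1) ≤ W n + 1) (htop : Tendsto W atTop atTop) (ht0 : ∀ k, W 0 < t k)
    (ht : ∀ k, t k + 1 ≤ t (k + 1)) :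
    ∃ M : ℕ → ℕ, StrictMono M ∧ ∀ k, t k ≤ W (M k) ∧ W (M k) < t k + 1 := by
  classical
  have hex : ∀ k, ∃ n, t k ≤ W n := fun k => (htop.eventually_ge_atTop (t k)).exists
  have hbd : ∀ k, t k ≤ W (Nat.find (hex k)) ∧ W (Nat.find (hex k)) < t k + 1 := by
    intro k
    refine ⟨Nat.find_spec (hex k), ?_⟩
    obtain ⟨n, hn⟩ := Nat.exists_eq_succ_of_ne_zero fun h =>
      (ht0 k).not_ge (h ▸ Nat.find_spec (hex k))
    have hlt : W n < t k := not_le.1 (Nat.find_min (hex k) (by omega))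
    rw [hn]
    linarith [hstep n]
  refine ⟨fun k => Nat.find (hex k), strictMono_nat_of_lt_succ fun k => ?_, hbd⟩
  exact hW.reflect_lt ((hbd k).2.trans_le ((ht k).trans (hbd (k + 1)).1))

theorem StrictMono.exists_tendsto_atTop_mem_Ico {M : ℕ → ℕ} (hM : StrictMono M) :
    ∃ κ : ℕ → ℕ, Tendsto κ atTop atTop ∧ ∀ m, M 0 ≤ m → M (κ m) ≤ m ∧ m < M (κ m + 1) := by
  classical
  refine ⟨fun m => Nat.findGreatest (fun k => M k ≤ m) m, ?_, fun m hm => ⟨?_, ?_⟩⟩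
  · exact tendsto_atTop_atTop.2 fun k =>
      ⟨M k, fun m hm => Nat.le_findGreatest (hM.le_apply.trans hm) hm⟩
  · exact Nat.findGreatest_spec (P := fun k => M k ≤ m) (Nat.zero_le m) hm
  · by_contra! h
    exact Nat.findGreatest_is_greatest (lt_add_one _) (hM.le_apply.trans h) h

theorem tendsto_div_of_monotone_of_tendsto_subseq {u v : ℕ → ℝ} {M : ℕ → ℕ} {α : ℝ}
    (hu : Monotone u) (hu0 : ∀ n, 0 ≤ u n) (hv : Monotone v) (hvM : ∀ k, 0 < v (M k))
    (hM : StrictMono M) (hsub : Tendsto (fun k => u (M k) / v (M k)) atTop (𝓝 α))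
    (hratio : Tendsto (fun k => v (M (k + 1)) / v (M k)) atTop (𝓝 1)) :
    Tendsto (fun n => u n / v n) atTop (𝓝 α) := by
  obtain ⟨κ, hκ, hbr⟩ := hM.exists_tendsto_atTop_mem_Ico
  have hlow : Tendsto (fun k => u (M k) / v (M (k + 1))) atTop (𝓝 α) := by
    simpa using (hsub.div hratio one_ne_zero).congr fun k => by
      rw [Pi.div_apply, div_div_div_cancel_right₀ (hvM k).ne']
  have hup : Tendsto (fun k => u (M (k + 1)) / v (M k)) atTop (𝓝 α) := by
    simpa using ((hsub.comp (tendsto_add_atTop_nat 1)).mul hratio).congr fun k => by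
      rw [Function.comp_apply, div_mul_div_cancel₀ (hvM (k + 1)).ne']
  refine tendsto_of_tendsto_of_tendsto_of_le_of_le' (hlow.comp hκ) (hup.comp hκ) ?_ ?_ <;>
    filter_upwards [eventually_ge_atTop (M 0)] with m hm <;> obtain ⟨h1, h2⟩ := hbr m hm
  · exact div_le_div₀ (hu0 m) (hu h1) ((hvM _).trans_le (hv h1)) (hv h2.le)
  · exact div_le_div₀ (hu0 _) (hu h2.le) (hvM _) (hv h1)

theorem tendsto_succ_div_of_mem_Ico_pow_four {x : ℕ → ℝ}
    (hx : ∀ k : ℕ, ((k : ℝ) + 1) ^ 4 ≤ x k ∧ x k < ((k : ℝ) + 1) ^ 4 + 1) :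
    Tendsto (fun k => x (k + 1) / x k) atTop (𝓝 1) := by
  have hpos : ∀ k, 0 < x k := fun k => lt_of_lt_of_le (by positivity) (hx k).1
  have hε := tendsto_one_div_add_atTop_nhds_zero_nat (𝕜 := ℝ)
  have hupper : Tendsto (fun k : ℕ => (1 + 1 / ((k : ℝ) + 1)) ^ 4 + (1 / ((k : ℝ) + 1)) ^ 4)
      atTop (𝓝 1) := by
    simpa using ((hε.const_add 1).pow 4).add (hε.pow 4)
  refine tendsto_of_tendsto_of_tendsto_of_le_of_le tendsto_const_nhds hupper (fun k => ?_)
    (fun k => ?_)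
  · have hgap : ((k : ℝ) + 1) ^ 4 + 1 ≤ ((k : ℝ) + 1 + 1) ^ 4 := by
      rw [← sub_nonneg]; ring_nf; positivity
    have h1 := (hx (k + 1)).1
    push_cast at h1
    rw [one_le_div (hpos k)]
    linarith [(hx k).2]
  · have h1 := (hx (k + 1)).2
    push_cast at h1
    rw [div_le_iff₀ (hpos k)]
    calc x (k + 1) ≤ ((k : ℝ) + 1 + 1) ^ 4 + 1 := h1.le
      _ = ((1 + 1 / ((k : ℝ) + 1)) ^ 4 + (1 / ((k : ℝ) + 1)) ^ 4) * ((k : ℝ) + 1) ^ 4 := by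
        field_simp
      _ ≤ _ := by gcongr; exact (hx k).1

theorem summable_div_div_sq_of_le_of_pow_four_le {V x : ℕ → ℝ} (hV0 : ∀ k, 0 ≤ V k)
    (hV : ∀ k, V k ≤ x k) (hx : ∀ k : ℕ, ((k : ℝ) + 1) ^ 4 ≤ x k) :
    Summable fun k => V k / (x k / ((k : ℝ) + 1)) ^ 2 := by
  refine Summable.of_nonneg_of_le (fun k => by have := hV0 k; positivity) (fun k => ?_)
    ((summable_nat_add_iff 1).2 (Real.summable_one_div_nat_pow.2 one_lt_two))
  have hk := hx k
  have hxpos : 0 < x k := lt_of_lt_of_le (by positivity) hk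
  push_cast
  calc V k / (x k / ((k : ℝ) + 1)) ^ 2 ≤ x k / (x k / ((k : ℝ) + 1)) ^ 2 := by gcongr; exact hV k
    _ = ((k : ℝ) + 1) ^ 2 / x k := by field_simp
    _ ≤ ((k : ℝ) + 1) ^ 2 / ((k : ℝ) + 1) ^ 4 := by gcongr
    _ = 1 / ((k : ℝ) + 1) ^ 2 := by field_simp

theorem ae_eventually_abs_sub_integral_lt {Ω : Type*} [MeasurableSpace Ω] {μ : Measure Ω}
    [IsFiniteMeasure μ] {X : ℕ → Ω → ℝ} {c : ℕ → ℝ} (hX : ∀ k, MemLp (X k) 2 μ)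
    (hc : ∀ k, 0 < c k) (hsum : Summable fun k => variance (X k) μ / c k ^ 2) :
    ∀ᵐ ω ∂μ, ∀ᶠ k in atTop, |X k ω - μ[X k]| < c k := by
  have hfin : ∑' k, μ {ω | c k ≤ |X k ω - μ[X k]|} ≠ ⊤ := by
    refine ne_top_of_le_ne_top ?_
      (ENNReal.tsum_le_tsum fun k => meas_ge_le_variance_div_sq (hX k) (hc k))
    rw [← ENNReal.ofReal_tsum_of_nonneg
      (fun k => by have := variance_nonneg (X k) μ; positivity) hsum]
    exact ENNReal.ofReal_ne_top
  filter_upwards [ae_eventually_notMem hfin] with ω hω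
  filter_upwards [hω] with k hk
  simpa using hk

theorem ae_tendsto_sum_div_of_pairwise_indepFun {Ω : Type*} [MeasurableSpace Ω] {μ : Measure Ω}
    [IsFiniteMeasure μ] {Y : ℕ → Ω → ℝ} {w : ℕ → ℝ} {α : ℝ}
    (hindep : Pairwise fun i j => IndepFun (Y i) (Y j) μ) (hL2 : ∀ j, MemLp (Y j) 2 μ)
    (hnonneg : ∀ j ω, 0 ≤ Y j ω) (hvar : ∀ j, variance (Y j) μ ≤ w j) (hw : ∀ j, w j ≤ 1)
    (htop : Tendsto (fun n => ∑ j ∈ range n, w j) atTop atTop)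
    (hmean : Tendsto (fun n => (∑ j ∈ range n, μ[Y j]) / ∑ j ∈ range n, w j) atTop (𝓝 α)) :
    ∀ᵐ ω ∂μ, Tendsto (fun n => (∑ j ∈ range n, Y j ω) / ∑ j ∈ range n, w j) atTop (𝓝 α) := by
  set W : ℕ → ℝ := fun n => ∑ j ∈ range n, w j
  set S : ℕ → Ω → ℝ := fun n => ∑ j ∈ range n, Y j
  have hWmono : Monotone W := monotone_nat_of_le_succ fun n => by
    simp only [W, sum_range_succ]
    linarith [(variance_nonneg (Y n) μ).trans (hvar n)]
  obtain ⟨M, hM, hMW⟩ := exists_strictMono_mem_Ico (t := fun k => ((k : ℝ) + 1) ^ 4) hWmono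
    (fun n => by simp only [W, sum_range_succ]; linarith [hw n]) htop
    (fun k => by simp only [W, sum_range_zero]; positivity)
    (fun k => by push_cast; rw [← sub_nonneg]; ring_nf; positivity)
  have hWpos : ∀ k, 0 < W (M k) := fun k => lt_of_lt_of_le (by positivity) (hMW k).1
  have hvarS : ∀ n, variance (S n) μ ≤ W n := fun n => by
    rw [IndepFun.variance_sum (fun j _ => hL2 j) fun i _ j _ hij => hindep hij]
    exact sum_le_sum fun j _ => hvar j
  have hES : ∀ n, μ[S n] = ∑ j ∈ range n, μ[Y j] := fun n => by
    simp only [S, Finset.sum_apply]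
    exact integral_finsetSum _ fun j _ => (hL2 j).integrable one_le_two
  -- As `W (M k) ≥ (k + 1) ^ 4`, Chebyshev bounds at deviation `W (M k) / (k + 1)` are summable.
  have hdev := ae_eventually_abs_sub_integral_lt (X := fun k => S (M k))
    (c := fun k => W (M k) / ((k : ℝ) + 1)) (fun k => memLp_finsetSum' _ fun j _ => hL2 j)
    (fun k => div_pos (hWpos k) (by positivity))
    (summable_div_div_sq_of_le_of_pow_four_le (fun k => variance_nonneg _ _)
      (fun k => hvarS (M k)) fun k => (hMW k).1)
  filter_upwards [hdev] with ω hω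
  have hsmall : Tendsto (fun k => (S (M k) ω - μ[S (M k)]) / W (M k)) atTop (𝓝 0) := by
    refine squeeze_zero_norm' ?_ tendsto_one_div_add_atTop_nhds_zero_nat
    filter_upwards [hω] with k hk
    rw [lt_div_iff₀ (by positivity)] at hk
    rw [Real.norm_eq_abs, abs_div, abs_of_pos (hWpos k), div_le_iff₀ (hWpos k),
      one_div_mul_eq_div, le_div_iff₀ (by positivity)]
    exact hk.le
  have hmeanM : Tendsto (fun k => μ[S (M k)] / W (M k)) atTop (𝓝 α) := by
    simp only [hES]
    exact hmean.comp hM.tendsto_atTop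
  have hsub := hsmall.add hmeanM
  rw [zero_add] at hsub
  refine tendsto_div_of_monotone_of_tendsto_subseq (M := M)
    (monotone_nat_of_le_succ fun n => ?_) (fun n => sum_nonneg fun j _ => hnonneg j ω) hWmono
    hWpos hM (hsub.congr fun k => ?_) (tendsto_succ_div_of_mem_Ico_pow_four hMW)
  · rw [sum_range_succ]
    linarith [hnonneg n ω]
  · simp only [S, Finset.sum_apply]
    ring

theorem variance_indicator_const_le {Ω : Type*} [MeasurableSpace Ω] {μ : Measure Ω}
    [IsProbabilityMeasure μ] {s : Set Ω} (hs : MeasurableSet s) (c : ℝ) :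
    variance (s.indicator fun _ => c) μ ≤ c ^ 2 * μ.real s := by
  have hsq : (s.indicator fun _ => c) ^ 2 = s.indicator fun _ => c ^ 2 := by
    ext ω
    by_cases h : ω ∈ s <;> simp [h]
  calc variance (s.indicator fun _ => c) μ ≤ μ[(s.indicator fun _ => c) ^ 2] :=
        variance_le_expectation_sq (aestronglyMeasurable_const.indicator hs)
    _ = c ^ 2 * μ.real s := by rw [hsq, integral_indicator_const _ hs, smul_eq_mul, mul_comm]

theorem ae_tendsto_sum_indicator_div_sum_inv {Ω : Type*} [MeasurableSpace Ω] {μ : Measure Ω}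
    [IsProbabilityMeasure μ] {E : ℕ → Set Ω} (hmeas : ∀ n, MeasurableSet (E n))
    (hind : iIndepSet E μ) (hprob : ∀ n, μ.real (E n) = (n : ℝ)⁻¹) {a : ℕ → ℝ} {α : ℝ}
    (ha : ∀ j, a j ∈ Set.Icc 0 1)
    (hlog : Tendsto (fun n => (∑ j ∈ range n, a j / j) / ∑ j ∈ range n, (j : ℝ)⁻¹) atTop (𝓝 α)) :
    ∀ᵐ ω ∂μ, Tendsto (fun n => (∑ j ∈ range n, {m | ω ∈ E m}.indicator a j) /
      ∑ j ∈ range n, (j : ℝ)⁻¹) atTop (𝓝 α) := by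
  set Y : ℕ → Ω → ℝ := fun j => (E j).indicator fun _ => a j
  have hindep : Pairwise fun i j => IndepFun (Y i) (Y j) μ := by
    have hcomp : ∀ j, Y j = (fun x => a j * x) ∘ (E j).indicator fun _ => 1 := fun j => by
      ext ω
      by_cases hω : ω ∈ E j <;> simp [Y, hω]
    intro i j hij
    rw [hcomp i, hcomp j]
    exact ((hind.iIndepFun_indicator (β := ℝ)).comp _
      fun j => measurable_const_mul (a j)).indepFun hij
  have hmean : ∀ j, μ[Y j] = a j / j := fun j => by
    rw [integral_indicator_const _ (hmeas j), hprob, smul_eq_mul, inv_mul_eq_div]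
  have hvar : ∀ j, variance (Y j) μ ≤ (j : ℝ)⁻¹ := fun j => by
    obtain ⟨ha0, ha1⟩ := ha j
    calc variance (Y j) μ ≤ a j ^ 2 * (j : ℝ)⁻¹ :=
          hprob j ▸ variance_indicator_const_le (hmeas j) _
      _ ≤ (j : ℝ)⁻¹ := mul_le_of_le_one_left (by positivity) (by nlinarith)
  have hY := ae_tendsto_sum_div_of_pairwise_indepFun hindep
    (fun j => memLp_indicator_const 2 (hmeas j) _ (Or.inr (measure_ne_top μ _)))
    (fun j => Set.indicator_nonneg fun _ _ => (ha j).1) hvar Nat.cast_inv_le_one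
    tendsto_sum_range_inv_natCast_atTop (by simpa only [hmean] using hlog)
  filter_upwards [hY] with ω hω
  convert hω using 4 with n j
  by_cases h : ω ∈ E j <;> simp [Y, h]

theorem sum_range_count_nth (S : Set ℕ) [DecidablePred (· ∈ S)] (f : ℕ → ℝ) (M : ℕ) :
    ∑ k ∈ range (Nat.count (· ∈ S) M), f (Nat.nth (· ∈ S) k) =
      ∑ j ∈ range M, S.indicator f j := by
  induction M with
  | zero => simp
  | succ M ih =>
    rw [Nat.count_succ, sum_range_succ, ← ih]
    by_cases h : M ∈ S
    · simp [h, sum_range_succ, Nat.nth_count h]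
    · simp [h]

theorem tendsto_sum_nth_div_of_tendsto {S : Set ℕ} [DecidablePred (· ∈ S)] {f L : ℕ → ℝ}
    {α : ℝ} (hL : Tendsto L atTop atTop)
    (hf : Tendsto (fun n => (∑ j ∈ range n, S.indicator f j) / L n) atTop (𝓝 α))
    (hS : Tendsto (fun n => (∑ j ∈ range n, S.indicator 1 j) / L n) atTop (𝓝 1)) :
    Tendsto (fun n => (∑ k ∈ range n, f (Nat.nth (· ∈ S) k)) / n) atTop (𝓝 α) := by
  have hcount : ∀ n, ∑ j ∈ range n, S.indicator 1 j = (Nat.count (· ∈ S) n : ℝ) := fun n => by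
    simpa using (sum_range_count_nth S 1 n).symm
  simp only [hcount] at hS
  have hcount_top : Tendsto (fun n => (Nat.count (· ∈ S) n : ℝ)) atTop atTop := by
    refine (hS.pos_mul_atTop one_pos hL).congr' ?_
    filter_upwards [hL.eventually_gt_atTop 0] with n hn
    exact div_mul_cancel₀ _ hn.ne'
  have hinf : S.Infinite := fun hfin => by
    obtain ⟨n, hn⟩ := (hcount_top.eventually_gt_atTop (hfin.toFinset.card : ℝ)).exists
    exact hn.not_ge (by exact_mod_cast Nat.count_le_card (p := (· ∈ S)) hfin n)
  have hratio : Tendsto (fun n => (∑ j ∈ range n, S.indicator f j) / Nat.count (· ∈ S) n)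
      atTop (𝓝 α) := by
    refine (div_one α ▸ hf.div hS one_ne_zero).congr' ?_
    filter_upwards [hL.eventually_gt_atTop 0] with n hn
    exact div_div_div_cancel_right₀ hn.ne' _ _
  refine (hratio.comp (Nat.nth_strictMono (p := (· ∈ S)) hinf).tendsto_atTop).congr fun n => ?_
  simp only [Function.comp_apply, ← sum_range_count_nth,
    Nat.count_nth_of_infinite (p := (· ∈ S)) hinf]

/-- If `A` has natural density `α`, then `A` has URI-density `α`:
almost surely `(1/n) ∑_{k=1}^n 1_A(N_k) → α`, where `N_k` is the `k`-th smallest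
element of the URI-set (here `N_{k+1} = Nat.nth (· ∈ E(ω)) k`, 0-indexed). -/
theorem stmt4 {Ω : Type*} [MeasurableSpace Ω] (μ : Measure Ω) [IsProbabilityMeasure μ]
    (E : ℕ → Set Ω) (hmeas : ∀ n, MeasurableSet (E n))
    (hind : iIndepSet E μ)
    (hprob : ∀ n : ℕ, 1 ≤ n → μ (E n) = 1 / n)
    (hzero : E 0 = ∅)
    (A : Set ℕ) (α : ℝ)
    (hnat : Tendsto (fun n : ℕ =>
        (∑ j ∈ Finset.Icc 1 n, Set.indicator A (fun _ => (1 : ℝ)) j) / n)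
      atTop (nhds α)) :
    ∀ᵐ ω ∂μ, Tendsto (fun n : ℕ =>
        (∑ k ∈ Finset.range n,
          Set.indicator A (fun _ => (1 : ℝ)) (Nat.nth (fun m => ω ∈ E m) k)) / n)
      atTop (nhds α) := by
  have hreal : ∀ n, μ.real (E n) = (n : ℝ)⁻¹ := by
    rintro (_ | n)
    · simp [hzero]
    · rw [measureReal_def, hprob _ n.succ_pos, ENNReal.toReal_div, ENNReal.toReal_natCast]
      simp
  have hlog1 : Tendsto (fun n => (∑ j ∈ range n, (1 : ℕ → ℝ) j / j) / ∑ j ∈ range n, (j : ℝ)⁻¹)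
      atTop (𝓝 1) := by
    refine tendsto_const_nhds.congr' ?_
    filter_upwards [tendsto_sum_range_inv_natCast_atTop.eventually_gt_atTop 0] with n hn
    simp [div_eq_mul_inv, mul_inv_cancel₀ hn.ne']
  filter_upwards [ae_tendsto_sum_indicator_div_sum_inv hmeas hind hreal
      (fun j => by by_cases h : j ∈ A <;> simp [h]) (tendsto_logarithmic_mean_of_tendsto_mean hnat),
    ae_tendsto_sum_indicator_div_sum_inv hmeas hind hreal (fun j => by simp) hlog1] with ω hA hE
  classical
  exact tendsto_sum_nth_div_of_tendsto tendsto_sum_range_inv_natCast_atTop hA hE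
end

section
/- Let U be uniformly distributed on [0,1], let ν be the distribution on (ℝ/ℤ)^ℓ of the random vector (log_{b_1} U mod 1, ..., log_{b_ℓ} U mod 1), where b_1,...,b_ℓ are integers ≥ 2. Then for any nonzero (m_1,...,m_ℓ) ∈ ℤ^ℓ with θ := m_1/ln b_1 + ... + m_ℓ/ln b_ℓ ≠ 0, the Fourier coefficient of ν at (m_1,...,m_ℓ) equals 1/(1 − 2πiθ), and in particular has modulus strictly less than 1. -/
/-!
On `(0, 1]` the character `∏ᵢ e(-mᵢ log_{bᵢ} u)` of the pushed-forward point is the power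
`u ^ (-2πiθ)`, so the Fourier coefficient is `∫₀¹ u ^ (-2πiθ) du = 1 / (1 - 2πiθ)`. As `2πiθ`
is a nonzero purely imaginary number, `|1 - 2πiθ|² = 1 + 4π²θ² > 1`.
-/

open MeasureTheory Complex

theorem prod_fourier_log_div_eq_cpow {ι : Type*} [Fintype ι] (m : ι → ℤ) (c : ι → ℝ)
    {u : ℝ} (hu : 0 < u) :
    ∏ i, fourier (-(m i)) ((Real.log u / c i : ℝ) : AddCircle (1 : ℝ))
      = (u : ℂ) ^ (-(2 * Real.pi * I * ∑ i, (m i : ℂ) / c i)) := by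
  rw [cpow_def_of_ne_zero (ofReal_ne_zero.mpr hu.ne'), ← ofReal_log hu.le, Finset.mul_sum,
    ← Finset.sum_neg_distrib, Finset.mul_sum, exp_sum]
  refine Finset.prod_congr rfl fun i _ => ?_
  rw [fourier_coe_apply]
  push_cast
  ring_nf

theorem setIntegral_Ioc_zero_one_cpow {r : ℂ} (hr : -1 < r.re) :
    ∫ u in Set.Ioc (0 : ℝ) 1, (u : ℂ) ^ r = 1 / (r + 1) := by
  have hr1 : r + 1 ≠ 0 := by
    intro h
    have := congrArg re h
    simp only [add_re, one_re, zero_re] at this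
    linarith
  rw [← intervalIntegral.integral_of_le zero_le_one, integral_cpow (Or.inl hr), ofReal_one,
    ofReal_zero, one_cpow, zero_cpow hr1, sub_zero]

theorem norm_one_div_one_sub_lt_one {z : ℂ} (hre : z.re = 0) (hz : z ≠ 0) :
    ‖1 / (1 - z)‖ < 1 := by
  have him : z.im ≠ 0 := fun h => hz (ext hre h)
  have hsq : 1 < normSq (1 - z) := by
    simp only [normSq_apply, sub_re, sub_im, one_re, one_im, hre]
    nlinarith [sq_pos_of_ne_zero him]
  have hnorm : 1 < ‖1 - z‖ := by
    rw [norm_def, Real.lt_sqrt zero_le_one]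
    simpa using hsq
  rw [norm_div, norm_one, div_lt_one (by linarith)]
  exact hnorm

theorem stmt8_general {ℓ : ℕ} (b : Fin ℓ → ℕ)
    (ν : Measure (Fin ℓ → AddCircle (1 : ℝ)))
    (hν : ν = Measure.map
      (fun (u : ℝ) (i : Fin ℓ) => ((Real.log u / Real.log (b i) : ℝ) : AddCircle (1 : ℝ)))
      (volume.restrict (Set.Ioc (0 : ℝ) 1)))
    (m : Fin ℓ → ℤ)
    (θ : ℝ) (hθ : θ = ∑ i, (m i : ℝ) / Real.log (b i)) (hθ0 : θ ≠ 0) :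
    (∫ t : Fin ℓ → AddCircle (1 : ℝ), ∏ i, fourier (-(m i)) (t i) ∂ν)
      = 1 / (1 - 2 * Real.pi * Complex.I * θ)
    ∧ ‖(1 / (1 - 2 * Real.pi * Complex.I * (θ : ℂ)))‖ < 1 := by
  have hθc : (θ : ℂ) = ∑ i, (m i : ℂ) / Real.log (b i) := by
    rw [hθ]
    push_cast
    rfl
  have hmeas : Measurable fun (u : ℝ) (i : Fin ℓ) =>
      ((Real.log u / Real.log (b i) : ℝ) : AddCircle (1 : ℝ)) :=
    measurable_pi_lambda _ fun i => AddCircle.measurable_mk'.comp (Real.measurable_log.div_const _)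
  have hchar : Continuous fun t : Fin ℓ → AddCircle (1 : ℝ) => ∏ i, fourier (-(m i)) (t i) :=
    continuous_finsetProd _ fun i _ => (fourier (-(m i))).continuous.comp (continuous_apply i)
  refine ⟨?_, norm_one_div_one_sub_lt_one (by simp) (by simp [hθ0, Real.pi_ne_zero])⟩
  subst hν
  rw [integral_map hmeas.aemeasurable hchar.aestronglyMeasurable,
    setIntegral_congr_fun measurableSet_Ioc fun u hu => prod_fourier_log_div_eq_cpow m _ hu.1,
    ← hθc, setIntegral_Ioc_zero_one_cpow (by simp)]
  ring_nf

/-- Fourier coefficients of the law `ν` on `(ℝ/ℤ)^ℓ` of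
`(log_{b_1} U mod 1, …, log_{b_ℓ} U mod 1)`, `U` uniform on `[0,1]`:
at a nonzero frequency `m` with `θ = ∑ m_i/ln b_i ≠ 0` the coefficient equals
`1/(1 − 2πiθ)`, which has modulus `< 1`. -/
theorem stmt8 {ℓ : ℕ} (b : Fin ℓ → ℕ) (hb : ∀ i, 2 ≤ b i)
    (ν : Measure (Fin ℓ → AddCircle (1 : ℝ)))
    (hν : ν = Measure.map
      (fun (u : ℝ) (i : Fin ℓ) => ((Real.log u / Real.log (b i) : ℝ) : AddCircle (1 : ℝ)))
      (volume.restrict (Set.Ioc (0 : ℝ) 1)))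
    (m : Fin ℓ → ℤ) (hm : m ≠ 0)
    (θ : ℝ) (hθ : θ = ∑ i, (m i : ℝ) / Real.log (b i)) (hθ0 : θ ≠ 0) :
    (∫ t : Fin ℓ → AddCircle (1 : ℝ), ∏ i, fourier (-(m i)) (t i) ∂ν)
      = 1 / (1 - 2 * Real.pi * Complex.I * θ)
    ∧ ‖(1 / (1 - 2 * Real.pi * Complex.I * (θ : ℂ)))‖ < 1 :=
  stmt8_general b ν hν m θ hθ hθ0
end

section
/- Let b_1,...,b_ℓ be integers ≥ 2 such that for all a_1,...,a_ℓ ∈ ℤ, a_1/ln b_1 + ... + a_ℓ/ln b_ℓ = 0 implies a_1 = ... = a_ℓ = 0. Let ν be the law on (ℝ/ℤ)^ℓ of (log_{b_1} U mod 1, ..., log_{b_ℓ} U mod 1) with U uniform on [0,1]. Then the only probability measure μ on (ℝ/ℤ)^ℓ satisfying μ ∗ ν = μ is the Haar (Lebesgue) measure. -/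
/-!
The `n`-th Fourier coefficient of `ν` is `∫₀¹ u ^ (2πi sₙ) du = (2πi sₙ + 1)⁻¹` with
`sₙ = ∑ nᵢ / ln bᵢ`, and the independence hypothesis says `sₙ ≠ 0` for `n ≠ 0`.
Hence `ν̂(n) ≠ 1`, so `μ̂(n) ν̂(n) = μ̂(n)` forces `μ̂(n) = 0`, which is the `n`-th
coefficient of Haar measure. A finite measure on the torus is determined by its Fourier
coefficients, since the trigonometric polynomials form a point-separating star subalgebra
of `C((ℝ/ℤ)ˡ, ℂ)`.
-/

open MeasureTheory Complex Set
open scoped Real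

instance : IsProbabilityMeasure (volume : Measure UnitAddCircle) := ⟨UnitAddCircle.measure_univ⟩

theorem UnitAddCircle.integral_fourier_eq_zero {n : ℤ} (hn : n ≠ 0) :
    ∫ x : UnitAddCircle, fourier n x = 0 := by
  simpa [fourierCoeff, AddCircle.integral_haarAddCircle, fourier_zero, Pi.single_apply, hn.symm]
    using congrFun (fourierCoeff_fourier (T := 1) n) 0

theorem integral_Ioc_zero_one_cpow {r : ℂ} (hr : -1 < r.re) :
    ∫ u in Ioc (0 : ℝ) 1, (u : ℂ) ^ r = (r + 1)⁻¹ := by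
  have hr1 : r + 1 ≠ 0 := by
    intro h
    have := congrArg re h
    simp only [add_re, one_re, zero_re] at this
    linarith
  rw [← intervalIntegral.integral_of_le zero_le_one, integral_cpow (Or.inl hr), ofReal_one,
    ofReal_zero, one_cpow, zero_cpow hr1, sub_zero, one_div]

theorem integral_conv_eq_mul_of_map_add {G : Type*} [AddMonoid G] [MeasurableSpace G]
    [MeasurableAdd₂ G] {μ ν : Measure G} [SFinite μ] [SFinite ν] {f : G → ℂ}
    (hf : Measurable f) (hadd : ∀ x y, f (x + y) = f x * f y) :
    ∫ x, f x ∂(μ ∗ ν) = (∫ x, f x ∂μ) * ∫ x, f x ∂ν := by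
  rw [Measure.conv, integral_map (by fun_prop) hf.aestronglyMeasurable]
  simp only [hadd]
  exact integral_prod_mul f f

namespace UnitAddTorus

variable {d : Type*} [Fintype d]

theorem mFourier_add_apply (n : d → ℤ) (x y : UnitAddTorus d) :
    mFourier n (x + y) = mFourier n x * mFourier n y := by
  simp only [mFourier, ContinuousMap.coe_mk, Pi.add_apply, fourier_apply, smul_add,
    AddCircle.toCircle_add, Circle.coe_mul, Finset.prod_mul_distrib]

theorem mFourier_coe_apply (n : d → ℤ) (x : d → ℝ) :
    mFourier n (fun i => (x i : UnitAddCircle)) = exp (2 * π * I * ∑ i, n i * x i) := by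
  rw [ofReal_sum, Finset.mul_sum, exp_sum]
  refine Finset.prod_congr rfl fun i _ => ?_
  rw [fourier_coe_apply]
  push_cast
  ring_nf

theorem integral_mFourier_eq_zero {n : d → ℤ} (hn : n ≠ 0) :
    ∫ x, mFourier n x = 0 := by
  obtain ⟨i, hi⟩ := Function.ne_iff.mp hn
  simp only [mFourier, ContinuousMap.coe_mk]
  rw [integral_fintype_prod_volume_eq_prod (fun i x => fourier (n i) x)]
  exact Finset.prod_eq_zero (Finset.mem_univ i) (UnitAddCircle.integral_fourier_eq_zero hi)

theorem ext_of_integral_mFourier {μ ν : Measure (UnitAddTorus d)}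
    [IsFiniteMeasure μ] [IsFiniteMeasure ν]
    (h : ∀ n, ∫ x, mFourier n x ∂μ = ∫ x, mFourier n x ∂ν) : μ = ν := by
  have hint (f : C(UnitAddTorus d, ℂ)) (ρ : Measure (UnitAddTorus d)) [IsFiniteMeasure ρ] :
      Integrable f ρ :=
    f.continuous.integrable_of_hasCompactSupport (HasCompactSupport.of_compactSpace f)
  have h_span : ∀ f ∈ Submodule.span ℂ (range (mFourier (d := d))),
      ∫ x, f x ∂μ = ∫ x, f x ∂ν := by
    intro f hf
    induction hf using Submodule.span_induction with
    | mem f hf => obtain ⟨n, rfl⟩ := hf; exact h n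
    | zero => simp
    | add f g _ _ hf hg =>
      simp only [ContinuousMap.add_apply]
      rw [integral_add (hint f μ) (hint g μ), integral_add (hint f ν) (hint g ν), hf, hg]
    | smul c f _ hf =>
      simp only [ContinuousMap.smul_apply, smul_eq_mul, integral_const_mul, hf]
  refine ext_of_forall_mem_subalgebra_integral_eq_of_polish
    (A := (mFourierSubalgebra d).comap (BoundedContinuousFunction.toContinuousMapStarₐ ℂ)) ?_ ?_
  · intro x y hxy
    obtain ⟨_, ⟨f, hf, rfl⟩, hfxy⟩ := mFourierSubalgebra_separatesPoints hxy
    exact ⟨_, ⟨f, ⟨BoundedContinuousFunction.mkOfCompact f, hf, rfl⟩, rfl⟩, hfxy⟩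
  · intro g hg
    exact h_span (BoundedContinuousFunction.toContinuousMapStarₐ ℂ g) <| by
      rw [← mFourierSubalgebra_coe]; exact hg

theorem integral_mFourier_map_log_div_log (b : d → ℝ) (n : d → ℤ) :
    ∫ x, mFourier n x ∂(Measure.map
      (fun (u : ℝ) (i : d) => ((Real.log u / Real.log (b i) : ℝ) : UnitAddCircle))
      (volume.restrict (Ioc 0 1)))
      = (2 * π * I * ∑ i, n i / Real.log (b i) + 1)⁻¹ := by
  set s : ℝ := ∑ i, n i / Real.log (b i)
  have h_meas : Measurable fun (u : ℝ) (i : d) =>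
      ((Real.log u / Real.log (b i) : ℝ) : UnitAddCircle) :=
    measurable_pi_lambda _ fun i => AddCircle.measurable_mk'.comp (Real.measurable_log.div_const _)
  have h_cpow : ∀ u ∈ Ioc (0 : ℝ) 1,
      mFourier n (fun i => ((Real.log u / Real.log (b i) : ℝ) : UnitAddCircle))
        = (u : ℂ) ^ (2 * π * I * s) := by
    intro u hu
    rw [mFourier_coe_apply, cpow_def_of_ne_zero (ofReal_ne_zero.mpr hu.1.ne'),
      ← ofReal_log hu.1.le]
    congr 1
    simp only [s, ofReal_sum, Finset.mul_sum]
    refine Finset.sum_congr rfl fun i _ => ?_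
    push_cast
    ring
  rw [integral_map h_meas.aemeasurable (mFourier n).continuous.aestronglyMeasurable,
    setIntegral_congr_fun measurableSet_Ioc h_cpow, integral_Ioc_zero_one_cpow (by simp)]

end UnitAddTorus

open UnitAddTorus in
theorem stmt9_general {ℓ : ℕ} (b : Fin ℓ → ℕ)
    (hindep : ∀ a : Fin ℓ → ℤ, (∑ i, (a i : ℝ) / Real.log (b i)) = 0 → a = 0)
    (ν : Measure (Fin ℓ → AddCircle (1 : ℝ)))
    (hν : ν = Measure.map
      (fun (u : ℝ) (i : Fin ℓ) => ((Real.log u / Real.log (b i) : ℝ) : AddCircle (1 : ℝ)))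
      (volume.restrict (Set.Ioc (0 : ℝ) 1)))
    (μ : Measure (Fin ℓ → AddCircle (1 : ℝ))) [IsProbabilityMeasure μ]
    (hinv : μ ∗ ν = μ) :
    μ = volume := by
  refine ext_of_integral_mFourier fun n => ?_
  rcases eq_or_ne n 0 with rfl | hn
  · simp [mFourier_zero]
  have hν_coeff : ∫ x, mFourier n x ∂ν ≠ 1 := by
    rw [hν, integral_mFourier_map_log_div_log, Ne, inv_eq_one, add_eq_right]
    simp only [mul_eq_zero, ofReal_eq_zero, Real.pi_ne_zero, I_ne_zero, OfNat.ofNat_ne_zero,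
      or_self, false_or]
    exact mt (hindep n) hn
  have : IsFiniteMeasure ν := hν ▸ inferInstance
  have h_fixed := integral_conv_eq_mul_of_map_add (μ := μ) (ν := ν)
    (mFourier n).continuous.measurable (mFourier_add_apply n)
  rw [hinv, eq_comm, mul_right_eq_self₀] at h_fixed
  rw [h_fixed.resolve_left hν_coeff, integral_mFourier_eq_zero hn]

/-- If `b_1,…,b_ℓ ≥ 2` satisfy the rational independence of `1/ln b_i`, and `ν` is
the law on `(ℝ/ℤ)^ℓ` of `(log_{b_i} U mod 1)_i` with `U` uniform on `[0,1]`, then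
the only probability measure `μ` with `μ ∗ ν = μ` is the Haar (Lebesgue) measure. -/
theorem stmt9 {ℓ : ℕ} (b : Fin ℓ → ℕ) (hb : ∀ i, 2 ≤ b i)
    (hindep : ∀ a : Fin ℓ → ℤ, (∑ i, (a i : ℝ) / Real.log (b i)) = 0 → a = 0)
    (ν : Measure (Fin ℓ → AddCircle (1 : ℝ)))
    (hν : ν = Measure.map
      (fun (u : ℝ) (i : Fin ℓ) => ((Real.log u / Real.log (b i) : ℝ) : AddCircle (1 : ℝ)))
      (volume.restrict (Set.Ioc (0 : ℝ) 1)))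
    (μ : Measure (Fin ℓ → AddCircle (1 : ℝ))) [IsProbabilityMeasure μ]
    (hinv : μ ∗ ν = μ) :
    μ = volume :=
  stmt9_general b hindep ν hν μ hinv
end

section
/- Let E be a URI-set with elements N_1 = 1 < N_2 < ..., and for n ≥ 1, k ≥ 1 let P_k(n) = P(N_k = n). Then for all 2 ≤ k ≤ n, P_k(n) = ((n−2)/n)·P_k(n−1) + (1/n)·P_{k−1}(n−1). -/
/-!
Write `C_m(ω) = #{i < m | ω ∈ E i}`. For `n ≠ 0` the event `N_k = n` is `{n ∈ E} ∩ {C_n = k - 1}`,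
and `C_n` only depends on `E 0, …, E (n-1)`, so `P_k(n) = P(C_n = k - 1) / n`. Conditioning on
whether `n - 1 ∈ E` gives `P(C_n = k - 1) = (1 - 1/(n-1)) P(C_{n-1} = k - 1) + P(C_{n-1} = k - 2)/(n-1)`,
and substituting `P(C_{n-1} = j) = (n-1) P_{j+1}(n-1)` yields the recursion.
-/

open MeasureTheory ProbabilityTheory MeasurableSpace

open scoped Classical

theorem Nat.nth_eq_iff_of_ne_zero {p : ℕ → Prop} [DecidablePred p] {j n : ℕ} (hn : n ≠ 0) :
    Nat.nth p j = n ↔ p n ∧ Nat.count p n = j := by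
  constructor
  · rintro rfl
    exact ⟨Nat.nth_mem_of_ne_zero hn,
      Nat.count_nth fun hf => Nat.lt_card_toFinset_of_nth_ne_zero hn hf⟩
  · rintro ⟨hp, rfl⟩
    exact Nat.nth_count hp

theorem measurable_count_mem {Ω : Type*} {m : MeasurableSpace Ω} {E : ℕ → Set Ω} {n : ℕ}
    (hE : ∀ i < n, MeasurableSet[m] (E i)) :
    Measurable[m] fun ω => Nat.count (fun i => ω ∈ E i) n := by
  simp_rw [Nat.count_eq_card_filter_range, Finset.card_filter]
  exact Finset.measurable_sum _ fun i hi =>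
    Measurable.ite (hE i (Finset.mem_range.1 hi)) measurable_const measurable_const

section IndependentSets

variable {Ω : Type*} {E : ℕ → Set Ω}

theorem setOf_nth_mem_eq {j n : ℕ} (hn : n ≠ 0) :
    {ω | Nat.nth (fun m => ω ∈ E m) j = n} = E n ∩ {ω | Nat.count (fun i => ω ∈ E i) n = j} := by
  ext ω
  exact Nat.nth_eq_iff_of_ne_zero hn

theorem setOf_count_mem_succ_eq (m j : ℕ) :
    {ω | Nat.count (fun i => ω ∈ E i) (m + 1) = j + 1}
      = ((E m)ᶜ ∩ {ω | Nat.count (fun i => ω ∈ E i) m = j + 1})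
        ∪ (E m ∩ {ω | Nat.count (fun i => ω ∈ E i) m = j}) := by
  ext ω
  by_cases h : ω ∈ E m <;> simp [Nat.count_succ, h]

variable [MeasurableSpace Ω] (μ : Measure Ω)

theorem measureReal_inter_count_mem_eq_mul (hmeas : ∀ n, MeasurableSet (E n))
    (hind : iIndepSet E μ) {m : ℕ} (j : ℕ) {B : Set Ω}
    (hB : MeasurableSet[generateFrom {E m}] B) :
    μ.real (B ∩ {ω | Nat.count (fun i => ω ∈ E i) m = j})
      = μ.real B * μ.real {ω | Nat.count (fun i => ω ∈ E i) m = j} := by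
  have hcount : Measurable[generateFrom {t | ∃ i < m, E i = t}]
      fun ω => Nat.count (fun i => ω ∈ E i) m :=
    measurable_count_mem fun i hi => measurableSet_generateFrom ⟨i, hi, rfl⟩
  have hindep := (hind.indep_generateFrom_lt hmeas m).indepSet_of_measurableSet hB
    (hcount (measurableSet_singleton j))
  rw [measureReal_def, measureReal_def, measureReal_def, ← ENNReal.toReal_mul]
  exact congrArg ENNReal.toReal hindep.measure_inter_eq_mul

theorem measureReal_nth_mem_eq (hmeas : ∀ n, MeasurableSet (E n)) (hind : iIndepSet E μ)
    {n : ℕ} (hn : n ≠ 0) (j : ℕ) :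
    μ.real {ω | Nat.nth (fun m => ω ∈ E m) j = n}
      = μ.real (E n) * μ.real {ω | Nat.count (fun i => ω ∈ E i) n = j} := by
  rw [setOf_nth_mem_eq hn]
  exact measureReal_inter_count_mem_eq_mul μ hmeas hind j (measurableSet_generateFrom rfl)

theorem measureReal_count_mem_succ [IsProbabilityMeasure μ] (hmeas : ∀ n, MeasurableSet (E n))
    (hind : iIndepSet E μ) (m j : ℕ) :
    μ.real {ω | Nat.count (fun i => ω ∈ E i) (m + 1) = j + 1}
      = (1 - μ.real (E m)) * μ.real {ω | Nat.count (fun i => ω ∈ E i) m = j + 1}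
        + μ.real (E m) * μ.real {ω | Nat.count (fun i => ω ∈ E i) m = j} := by
  have hEm : MeasurableSet[generateFrom {E m}] (E m) := measurableSet_generateFrom rfl
  have hdisj : Disjoint ((E m)ᶜ ∩ {ω | Nat.count (fun i => ω ∈ E i) m = j + 1})
      (E m ∩ {ω | Nat.count (fun i => ω ∈ E i) m = j}) :=
    Set.disjoint_of_subset Set.inter_subset_left Set.inter_subset_left disjoint_compl_left
  have hcount : Measurable fun ω => Nat.count (fun i => ω ∈ E i) m :=
    measurable_count_mem fun i _ => hmeas i
  rw [setOf_count_mem_succ_eq, measureReal_union hdisj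
      ((hmeas m).inter (hcount (measurableSet_singleton j))),
    measureReal_inter_count_mem_eq_mul μ hmeas hind _ hEm.compl,
    measureReal_inter_count_mem_eq_mul μ hmeas hind _ hEm, probReal_compl_eq_one_sub (hmeas m)]

end IndependentSets

theorem stmt13_general {Ω : Type*} [MeasurableSpace Ω] (μ : Measure Ω) [IsProbabilityMeasure μ]
    (E : ℕ → Set Ω) (hmeas : ∀ n, MeasurableSet (E n))
    (hind : iIndepSet E μ)
    (hprob : ∀ n : ℕ, 1 ≤ n → μ (E n) = 1 / n)
    (k n : ℕ) (hk : 2 ≤ k) (hkn : k ≤ n) :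
    (μ {ω | Nat.nth (fun m => ω ∈ E m) (k - 1) = n}).toReal
      = (((n : ℝ) - 2) / n) * (μ {ω | Nat.nth (fun m => ω ∈ E m) (k - 1) = n - 1}).toReal
        + (1 / n) * (μ {ω | Nat.nth (fun m => ω ∈ E m) (k - 2) = n - 1}).toReal := by
  obtain ⟨j, rfl⟩ := Nat.exists_eq_add_of_le' hk
  obtain ⟨m, rfl⟩ := Nat.exists_eq_add_of_le' (hk.trans hkn)
  have hprobReal (i : ℕ) : μ.real (E (i + 1)) = 1 / (i + 1) := by
    rw [measureReal_def, hprob (i + 1) (Nat.le_add_left 1 i), ENNReal.toReal_div]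
    norm_cast
  simp only [← measureReal_def, Nat.add_sub_cancel, show j + 2 - 1 = j + 1 by omega,
    show m + 2 - 1 = m + 1 by omega]
  rw [measureReal_nth_mem_eq μ hmeas hind m.succ_ne_zero,
    measureReal_nth_mem_eq μ hmeas hind (m + 1).succ_ne_zero,
    measureReal_nth_mem_eq μ hmeas hind m.succ_ne_zero, measureReal_count_mem_succ μ hmeas hind,
    hprobReal, hprobReal]
  push_cast
  field_simp
  ring

/-- For a URI-set with ordered elements `N_1 = 1 < N_2 < …` (where
`N_k(ω) = Nat.nth (· ∈ E(ω)) (k-1)`), the distribution `P_k(n) = P(N_k = n)`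
satisfies, for `2 ≤ k ≤ n`,
`P_k(n) = ((n-2)/n)·P_k(n-1) + (1/n)·P_{k-1}(n-1)`. -/
theorem stmt13 {Ω : Type*} [MeasurableSpace Ω] (μ : Measure Ω) [IsProbabilityMeasure μ]
    (E : ℕ → Set Ω) (hmeas : ∀ n, MeasurableSet (E n))
    (hind : iIndepSet E μ)
    (hprob : ∀ n : ℕ, 1 ≤ n → μ (E n) = 1 / n)
    (hzero : E 0 = ∅)
    (k n : ℕ) (hk : 2 ≤ k) (hkn : k ≤ n) :
    (μ {ω | Nat.nth (fun m => ω ∈ E m) (k - 1) = n}).toReal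
      = (((n : ℝ) - 2) / n) * (μ {ω | Nat.nth (fun m => ω ∈ E m) (k - 1) = n - 1}).toReal
        + (1 / n) * (μ {ω | Nat.nth (fun m => ω ∈ E m) (k - 2) = n - 1}).toReal :=
  stmt13_general μ E hmeas hind hprob k n hk hkn
end

section
/- Let E be a URI-set with elements N_1 = 1 < N_2 < .... Then for all k ≥ 2 and n ≥ k, P(N_k = n) = (1/(n(n−1))) · ∑ 1/(j_2 j_3 ⋯ j_{k−1}), where the sum ranges over all integer tuples 1 ≤ j_2 < j_3 < ... < j_{k−1} ≤ n−2 (with the convention that the empty sum/product for k = 2 gives P(N_2 = n) = 1/(n(n−1))). -/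
/-!
`N_k = n` means that `n ∈ E` and exactly `k - 1` of the indices `0, …, n - 1` lie in `E`.
Splitting this event according to which indices these are, independence turns each piece into a
product of weights `1/j` (for `j ∈ E`) and `1 - 1/j` (for `j ∉ E`). Index `0` never lies in `E`
and index `1` almost surely does, so only the patterns `{1} ∪ T` with `T ⊆ {2, …, n - 1}`
contribute, each with weight `(1/n) ∏_{2 ≤ j < n} (1 - 1/j) ∏_{j ∈ T} 1/(j - 1)`; the first
product telescopes to `1/(n - 1)`, and shifting `T` down by one gives the sum over subsets of
`{1, …, n - 2}`.
-/

open MeasureTheory ProbabilityTheory Finset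

namespace Nat

lemma nth_eq_iff_count_eq {p : ℕ → Prop} [DecidablePred p] {i n : ℕ} (hn : n ≠ 0) :
    nth p i = n ↔ p n ∧ count p n = i := by
  refine ⟨fun h => ?_, fun ⟨hpn, hc⟩ => hc ▸ nth_count hpn⟩
  by_cases hi : ∀ hf : (Set.ofPred p).Finite, i < #hf.toFinset
  · exact ⟨h ▸ nth_mem i hi, h ▸ count_nth hi⟩
  · simp only [not_forall, not_lt] at hi
    exact absurd (h ▸ nth_eq_zero.2 (Or.inr hi)) hn

lemma nth_eq_iff_exists_filter_range_succ_eq {p : ℕ → Prop} [DecidablePred p] {i n : ℕ}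
    (hn : n ≠ 0) :
    nth p i = n ↔ ∃ S ∈ (range n).powersetCard i, {m ∈ range (n + 1) | p m} = insert n S := by
  rw [nth_eq_iff_count_eq hn, count_eq_card_filter_range, range_add_one, filter_insert]
  constructor
  · rintro ⟨hpn, hcard⟩
    exact ⟨_, mem_powersetCard.2 ⟨filter_subset _ _, hcard⟩, if_pos hpn⟩
  · rintro ⟨S, hS, hfilter⟩
    have hnS : n ∉ S := fun h => by simpa using (mem_powersetCard.1 hS).1 h
    split_ifs at hfilter with hpn
    · refine ⟨hpn, ?_⟩
      rw [insert_erase_invOn.2.injOn (by simp) hnS hfilter]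
      exact (mem_powersetCard.1 hS).2
    · have : n ∈ {m ∈ range n | p m} := hfilter ▸ mem_insert_self n S
      simp at this

end Nat

namespace Finset

variable {α R : Type*} [DecidableEq α] [CommSemiring R] {a : α} {I S : Finset α} {f g : α → R}

lemma prod_insert_ite_insert (ha : a ∉ I) :
    ∏ j ∈ insert a I, (if j ∈ insert a S then f j else g j)
      = f a * ∏ j ∈ I, (if j ∈ S then f j else g j) := by
  rw [prod_insert ha, if_pos (mem_insert_self a S)]
  congr 1
  refine prod_congr rfl fun j hj => ?_
  simp only [mem_insert, ne_of_mem_of_not_mem hj ha, false_or]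

lemma sum_powersetCard_succ_insert_prod_ite (ha : a ∉ I) (m : ℕ) (f g : α → R) :
    ∑ S ∈ (insert a I).powersetCard (m + 1), ∏ j ∈ insert a I, (if j ∈ S then f j else g j)
      = f a * ∑ S ∈ I.powersetCard m, ∏ j ∈ I, (if j ∈ S then f j else g j)
        + g a * ∑ S ∈ I.powersetCard (m + 1), ∏ j ∈ I, (if j ∈ S then f j else g j) := by
  have hnot : ∀ {k}, ∀ S ∈ I.powersetCard k, a ∉ S :=
    fun S hS h => ha ((mem_powersetCard.1 hS).1 h)
  rw [powersetCard_succ_insert ha, sum_union, sum_image, add_comm, mul_sum, mul_sum]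
  · congr 1
    · exact sum_congr rfl fun S _ => prod_insert_ite_insert ha
    · exact sum_congr rfl fun S hS => by rw [prod_insert ha, if_neg (hnot S hS)]
  · exact fun S hS T hT => insert_erase_invOn.2.injOn (hnot S hS) (hnot T hT)
  · refine disjoint_left.2 fun S hS hS' => hnot S hS ?_
    obtain ⟨T, -, rfl⟩ := mem_image.1 hS'
    exact mem_insert_self a T

end Finset

namespace ProbabilityTheory

section Pattern

variable {ι Ω : Type*} [DecidableEq ι] {E : ι → Set Ω} {I S : Finset ι}

open scoped Classical in
def patternEvent (E : ι → Set Ω) (I S : Finset ι) : Set Ω := {ω | {i ∈ I | ω ∈ E i} = S}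

lemma patternEvent_eq_biInter (hS : S ⊆ I) :
    patternEvent E I S = ⋂ i ∈ I, if i ∈ S then E i else (E i)ᶜ := by
  ext ω
  simp only [patternEvent, Set.mem_ofPred_eq, Set.mem_iInter, Finset.ext_iff, mem_filter]
  grind

lemma setOf_nth_eq_biUnion_patternEvent (E : ℕ → Set Ω) {i n : ℕ} (hn : n ≠ 0) :
    {ω | Nat.nth (fun m => ω ∈ E m) i = n}
      = ⋃ S ∈ (range n).powersetCard i, patternEvent E (range (n + 1)) (insert n S) := by
  classical
  ext ω
  simp only [Set.mem_ofPred_eq, Set.mem_iUnion, patternEvent, exists_prop,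
    Nat.nth_eq_iff_exists_filter_range_succ_eq hn]

variable [MeasurableSpace Ω] {μ : Measure Ω}

lemma measurableSet_patternEvent (hmeas : ∀ i, MeasurableSet (E i)) (hS : S ⊆ I) :
    MeasurableSet (patternEvent E I S) := by
  rw [patternEvent_eq_biInter hS]
  refine Finset.measurableSet_biInter I fun i _ => ?_
  split_ifs
  exacts [hmeas i, (hmeas i).compl]

lemma iIndepSet.measureReal_patternEvent (h : iIndepSet E μ) (hmeas : ∀ i, MeasurableSet (E i))
    (hS : S ⊆ I) :
    μ.real (patternEvent E I S) = ∏ i ∈ I, if i ∈ S then μ.real (E i) else 1 - μ.real (E i) := by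
  have := h.isProbabilityMeasure
  rw [patternEvent_eq_biInter hS, measureReal_def, (iIndepSet_iff E μ).1 h I, ENNReal.toReal_prod]
  · refine prod_congr rfl fun i _ => ?_
    split_ifs
    exacts [rfl, probReal_compl_eq_one_sub (hmeas i)]
  · intro i _
    split_ifs
    exacts [MeasurableSpace.measurableSet_generateFrom rfl,
      (MeasurableSpace.measurableSet_generateFrom (Set.mem_singleton (E i))).compl]

end Pattern

lemma iIndepSet.measureReal_nth_eq {Ω : Type*} [MeasurableSpace Ω] {μ : Measure Ω}
    {E : ℕ → Set Ω} (h : iIndepSet E μ) (hmeas : ∀ i, MeasurableSet (E i)) {i n : ℕ}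
    (hn : n ≠ 0) :
    μ.real {ω | Nat.nth (fun m => ω ∈ E m) i = n}
      = μ.real (E n) * ∑ S ∈ (range n).powersetCard i,
          ∏ j ∈ range n, if j ∈ S then μ.real (E j) else 1 - μ.real (E j) := by
  have := h.isProbabilityMeasure
  have hsub : ∀ S ∈ (range n).powersetCard i, insert n S ⊆ range (n + 1) := fun S hS =>
    insert_subset (by simp) ((mem_powersetCard.1 hS).1.trans (range_mono n.le_succ))
  rw [setOf_nth_eq_biUnion_patternEvent E hn, measureReal_biUnion_finset, mul_sum]
  · refine sum_congr rfl fun S hS => ?_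
    rw [h.measureReal_patternEvent hmeas (hsub S hS), range_add_one,
      prod_insert_ite_insert notMem_range_self]
  · intro S hS T hT hST
    refine Set.disjoint_left.2 fun ω hωS hωT => hST ?_
    exact insert_erase_invOn.2.injOn (fun h => by simpa using (mem_powersetCard.1 hS).1 h)
      (fun h => by simpa using (mem_powersetCard.1 hT).1 h) (hωS.symm.trans hωT)
  · exact fun S hS => measurableSet_patternEvent hmeas (hsub S hS)

end ProbabilityTheory

lemma prod_Icc_one_sub_inv_add_one (N : ℕ) :
    ∏ j ∈ Icc 1 N, (1 - ((j : ℝ) + 1)⁻¹) = ((N : ℝ) + 1)⁻¹ := by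
  induction N with
  | zero => simp
  | succ N ih =>
    rw [prod_Icc_succ_top (by omega), ih]
    push_cast
    field_simp
    ring

lemma prod_Icc_ite_inv_add_one {N : ℕ} {s : Finset ℕ} (hs : s ⊆ Icc 1 N) :
    ∏ j ∈ Icc 1 N, (if j ∈ s then ((j : ℝ) + 1)⁻¹ else 1 - ((j : ℝ) + 1)⁻¹)
      = ((N : ℝ) + 1)⁻¹ * (∏ j ∈ s, (j : ℝ))⁻¹ := by
  have hfactor : ∀ j ∈ Icc 1 N, (if j ∈ s then ((j : ℝ) + 1)⁻¹ else 1 - ((j : ℝ) + 1)⁻¹)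
      = (1 - ((j : ℝ) + 1)⁻¹) * (if j ∈ s then (j : ℝ)⁻¹ else 1) := by
    intro j hj
    have : (j : ℝ) ≠ 0 := by have := (mem_Icc.1 hj).1; positivity
    split_ifs
    · field_simp
      ring
    · ring
  rw [prod_congr rfl hfactor, prod_mul_distrib, prod_Icc_one_sub_inv_add_one, prod_ite_mem,
    inter_eq_right.2 hs, prod_inv_distrib]

lemma sum_powersetCard_prod_range_ite_inv (m N : ℕ) :
    ∑ S ∈ (range (N + 2)).powersetCard (m + 1),
        ∏ j ∈ range (N + 2), (if j ∈ S then (j : ℝ)⁻¹ else 1 - (j : ℝ)⁻¹)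
      = ((N : ℝ) + 1)⁻¹ * ∑ s ∈ (Icc 1 N).powersetCard m, (∏ j ∈ s, (j : ℝ))⁻¹ := by
  set J := (Icc 1 N).map (addRightEmbedding 1)
  have hrange : range (N + 2) = insert 0 (insert 1 J) := by
    ext j
    simp only [mem_range, mem_insert, J, map_add_right_Icc, mem_Icc]
    omega
  rw [hrange, sum_powersetCard_succ_insert_prod_ite (by simp [J]),
    sum_powersetCard_succ_insert_prod_ite (by simp [J])]
  -- `0 ∈ S` has weight `0⁻¹ = 0` and `1 ∉ S` has weight `1 - 1⁻¹ = 0`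
  simp only [Nat.cast_zero, inv_zero, zero_mul, zero_add, sub_zero, one_mul, Nat.cast_one,
    inv_one, sub_self, add_zero]
  rw [powersetCard_map, sum_map, mul_sum]
  refine sum_congr rfl fun s hs => ?_
  simp only [J, RelEmbedding.coe_toEmbedding, mapEmbedding_apply, prod_map, mem_map']
  simp only [addRightEmbedding_apply, Nat.cast_add, Nat.cast_one]
  exact prod_Icc_ite_inv_add_one (mem_powersetCard.1 hs).1

theorem stmt14_general {Ω : Type*} [MeasurableSpace Ω] (μ : Measure Ω)
    (E : ℕ → Set Ω) (hmeas : ∀ n, MeasurableSet (E n))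
    (hind : iIndepSet E μ)
    (hprob : ∀ n : ℕ, 1 ≤ n → μ (E n) = 1 / n)
    (hzero : E 0 = ∅)
    (k n : ℕ) (hk : 2 ≤ k) (hkn : k ≤ n) :
    (μ {ω | Nat.nth (fun m => ω ∈ E m) (k - 1) = n}).toReal
      = (1 / ((n : ℝ) * ((n : ℝ) - 1)))
        * ∑ s ∈ (Finset.Icc 1 (n - 2)).powersetCard (k - 2),
            1 / ∏ j ∈ s, (j : ℝ) := by
  obtain ⟨m, rfl⟩ : ∃ m, k = m + 2 := ⟨k - 2, by omega⟩
  obtain ⟨N, rfl⟩ : ∃ N, n = N + 2 := ⟨n - 2, by omega⟩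
  have hE : ∀ i, μ.real (E i) = (i : ℝ)⁻¹ := by
    intro i
    rcases i.eq_zero_or_pos with rfl | hi
    · simp [hzero]
    · simp [measureReal_def, hprob i hi]
  rw [← measureReal_def, hind.measureReal_nth_eq hmeas (by omega)]
  simp only [hE, show m + 2 - 1 = m + 1 by omega, Nat.add_sub_cancel, one_div]
  rw [sum_powersetCard_prod_range_ite_inv, ← mul_assoc, ← mul_inv]
  congr 3
  push_cast
  ring

/-- For a URI-set with ordered elements `N_1 = 1 < N_2 < …`, for `k ≥ 2` and `n ≥ k`:
`P(N_k = n) = (1/(n(n-1))) ∑ 1/(j_2 ⋯ j_{k-1})`, the sum being over all tuples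
`1 ≤ j_2 < … < j_{k-1} ≤ n-2` (i.e. over subsets of `{1,…,n-2}` of size `k-2`). -/
theorem stmt14 {Ω : Type*} [MeasurableSpace Ω] (μ : Measure Ω) [IsProbabilityMeasure μ]
    (E : ℕ → Set Ω) (hmeas : ∀ n, MeasurableSet (E n))
    (hind : iIndepSet E μ)
    (hprob : ∀ n : ℕ, 1 ≤ n → μ (E n) = 1 / n)
    (hzero : E 0 = ∅)
    (k n : ℕ) (hk : 2 ≤ k) (hkn : k ≤ n) :
    (μ {ω | Nat.nth (fun m => ω ∈ E m) (k - 1) = n}).toReal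
      = (1 / ((n : ℝ) * ((n : ℝ) - 1)))
        * ∑ s ∈ (Finset.Icc 1 (n - 2)).powersetCard (k - 2),
            1 / ∏ j ∈ s, (j : ℝ) :=
  stmt14_general μ E hmeas hind hprob hzero k n hk hkn
end

section
/- Let (P_k)_{k≥1} be a sequence of probability distributions on ℤ_+ such that for each k there exists n_k with: (i) n ↦ P_k(n) is non-decreasing on {1,...,n_k} and non-increasing on {n_k, n_k+1,...}; and (ii) for every integer m ≥ 1, P_k(m·n_k)/P_k(n_k) → 1 as k → ∞. Then for any A ⊆ ℤ_+ possessing natural density α (i.e., (1/n) ∑_{j=1}^n 1_A(j) → α), one has P_k(A) → α as k → ∞. -/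
/-!
Since `P_k(n) ≥ P_k((m+1) n_k) ≥ P_k(n_k)/2` on `[n_k, (m+1) n_k)` for large `k`, that stretch
carries mass at least `m n_k P_k(n_k)/2`; hence `n_k P_k(n_k) → 0`.
Below the mode `P_k(A)` therefore loses at most `n_k P_k(n_k)`. Above the mode the weights are
non-increasing, and Abel summation turns the density estimate `#(A ∩ [1, n]) = α n + o(n) + O(1)`
into `P_k(A ∩ [n_k, ∞)) = α P_k([n_k, ∞)) + O(ε) + O(P_k(n_k))`.
-/

open Filter Finset Topology

theorem abs_sum_range_mul_le_of_antitone {e q : ℕ → ℝ} {ε K : ℝ} (hq : Antitone q)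
    (hq0 : ∀ j, 0 ≤ q j) (he : ∀ t, |∑ j ∈ range t, e j| ≤ ε * t + K) (T : ℕ) :
    |∑ j ∈ range T, e j * q j| ≤ ε * ∑ j ∈ range T, q j + K * q 0 := by
  -- summation by parts, keeping the boundary term `q T * ∑ j < T, e j` apart
  have key : ∀ T, |∑ j ∈ range T, e j * q j - q T * ∑ j ∈ range T, e j|
      ≤ ε * ∑ j ∈ range T, q j + K * q 0 - q T * (ε * T + K) := by
    intro T
    induction T with
    | zero => simp [mul_comm]
    | succ T ih =>
      have hstep : ∑ j ∈ range (T + 1), e j * q j - q (T + 1) * ∑ j ∈ range (T + 1), e j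
          = (∑ j ∈ range T, e j * q j - q T * ∑ j ∈ range T, e j)
            + (q T - q (T + 1)) * ∑ j ∈ range (T + 1), e j := by
        simp only [sum_range_succ]; ring
      have hdrop : 0 ≤ q T - q (T + 1) := sub_nonneg.2 (hq T.le_succ)
      calc _ ≤ |∑ j ∈ range T, e j * q j - q T * ∑ j ∈ range T, e j|
              + |(q T - q (T + 1)) * ∑ j ∈ range (T + 1), e j| := hstep ▸ abs_add_le _ _
        _ ≤ ε * ∑ j ∈ range T, q j + K * q 0 - q T * (ε * T + K)
              + (q T - q (T + 1)) * (ε * (T + 1 : ℕ) + K) := by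
          rw [abs_mul, abs_of_nonneg hdrop]
          exact add_le_add ih (mul_le_mul_of_nonneg_left (he _) hdrop)
        _ = _ := by push_cast; simp only [sum_range_succ]; ring
  have htriangle := abs_sub_abs_le_abs_sub (∑ j ∈ range T, e j * q j)
    (q T * ∑ j ∈ range T, e j)
  rw [abs_mul, abs_of_nonneg (hq0 T)] at htriangle
  linarith [key T, mul_le_mul_of_nonneg_left (he T) (hq0 T)]

theorem abs_tsum_mul_le_of_antitone {e q : ℕ → ℝ} {ε K : ℝ} (hq : Antitone q)
    (hq0 : ∀ j, 0 ≤ q j) (hqs : Summable q) (heq : Summable fun j => e j * q j)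
    (he : ∀ t, |∑ j ∈ range t, e j| ≤ ε * t + K) :
    |∑' j, e j * q j| ≤ ε * ∑' j, q j + K * q 0 :=
  le_of_tendsto_of_tendsto' heq.hasSum.tendsto_sum_nat.abs
    ((hqs.hasSum.tendsto_sum_nat.const_mul ε).add_const _)
    (abs_sum_range_mul_le_of_antitone hq hq0 he)

theorem exists_abs_sub_mul_le_of_tendsto_div {u : ℕ → ℝ} {α ε : ℝ}
    (hu : Tendsto (fun n => u n / n) atTop (𝓝 α)) (hε : 0 < ε) :
    ∃ K, ∀ n : ℕ, |u n - α * n| ≤ ε * n + K := by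
  obtain ⟨N, hN⟩ := Metric.tendsto_atTop.1 hu ε hε
  refine ⟨∑ m ∈ range (N + 1), |u m - α * m|, fun n => ?_⟩
  have hK : 0 ≤ ∑ m ∈ range (N + 1), |u m - α * m| := sum_nonneg fun _ _ => abs_nonneg _
  rcases le_or_gt n N with hn | hn
  · have := single_le_sum (f := fun m => |u m - α * m|) (fun _ _ => abs_nonneg _)
      (mem_range.2 (Nat.lt_succ_of_le hn))
    have : (0 : ℝ) ≤ ε * n := by positivity
    linarith
  · have hn0 : (0 : ℝ) < n := by exact_mod_cast (N.zero_le.trans_lt hn)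
    have hclose : |u n / n - α| * n ≤ ε * n :=
      mul_le_mul_of_nonneg_right (hN n hn.le).le hn0.le
    rw [show u n - α * n = (u n / n - α) * n by field_simp, abs_mul, abs_of_pos hn0]
    linarith

theorem sum_range_add_eq_sum_Icc_sub {M : Type*} [AddCommGroup M] (f : ℕ → M) (s t : ℕ) :
    ∑ j ∈ range t, f (j + (s + 1)) = ∑ j ∈ Icc 1 (s + t), f j - ∑ j ∈ Icc 1 s, f j := by
  induction t with
  | zero => simp
  | succ t ih =>
    rw [sum_range_succ, ih, show s + (t + 1) = s + t + 1 by ring,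
      sum_Icc_succ_top (by omega : 1 ≤ s + t + 1), show t + (s + 1) = s + t + 1 by ring]
    abel

theorem mul_apply_le_tsum_of_antitone_from {p : ℕ → ℝ} {n : ℕ} (hp : ∀ j, 0 ≤ p j)
    (hs : Summable p) (hanti : ∀ a b, n ≤ a → a ≤ b → p b ≤ p a) (m : ℕ) :
    (m * n : ℝ) * p ((m + 1) * n) ≤ ∑' j, p j :=
  calc (m * n : ℝ) * p ((m + 1) * n) = #(Ico n ((m + 1) * n)) • p ((m + 1) * n) := by
        rw [Nat.card_Ico, add_mul, one_mul, Nat.add_sub_cancel, nsmul_eq_mul]; push_cast; rfl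
    _ ≤ ∑ j ∈ Ico n ((m + 1) * n), p j :=
        card_nsmul_le_sum _ _ _ fun j hj => hanti j _ (mem_Ico.1 hj).1 (mem_Ico.1 hj).2.le
    _ ≤ ∑' j, p j := hs.sum_le_tsum _ fun j _ => hp j

theorem tendsto_mul_apply_of_tendsto_ratio {P : ℕ → ℕ → ℝ} {nk : ℕ → ℕ}
    (hnonneg : ∀ k n, 0 ≤ P k n) (hsum : ∀ k, HasSum (P k) 1)
    (hmono : ∀ k m n, nk k ≤ m → m ≤ n → P k n ≤ P k m)
    (hratio : ∀ m : ℕ, 1 ≤ m →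
      Tendsto (fun k => P k (m * nk k) / P k (nk k)) atTop (𝓝 1)) :
    Tendsto (fun k => (nk k : ℝ) * P k (nk k)) atTop (𝓝 0) := by
  refine tendsto_order.2 ⟨fun a ha => Eventually.of_forall fun k =>
    ha.trans_le (by have := hnonneg k (nk k); positivity), fun ε hε => ?_⟩
  obtain ⟨m, hm⟩ := exists_nat_gt (2 / ε)
  have hm0 : (0 : ℝ) < m := (by positivity : (0 : ℝ) < 2 / ε).trans hm
  filter_upwards [(hratio (m + 1) (by omega)).eventually_const_lt (by norm_num : (1 : ℝ) / 2 < 1)]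
    with k hk
  have hc : 0 < P k (nk k) := (hnonneg k (nk k)).lt_of_ne fun h => by
    rw [← h, div_zero] at hk; norm_num at hk
  have hhalf : P k (nk k) / 2 < P k ((m + 1) * nk k) := by
    rw [lt_div_iff₀ hc] at hk; linarith
  have hmass := mul_apply_le_tsum_of_antitone_from (hnonneg k) (hsum k).summable (hmono k) m
  rw [(hsum k).tsum_eq] at hmass
  have hmn : (0 : ℝ) ≤ m * nk k := by positivity
  have hle : (nk k : ℝ) * P k (nk k) ≤ 2 / m := by
    rw [le_div_iff₀ hm0]
    nlinarith [mul_le_mul_of_nonneg_left hhalf.le hmn]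
  exact hle.trans_lt ((div_lt_iff₀ hm0).2 (by rwa [div_lt_iff₀ hε, mul_comm] at hm))

theorem abs_tsum_mul_sub_le_of_unimodal {p a : ℕ → ℝ} {n₀ : ℕ} {α ε K : ℝ}
    (hp : ∀ n, 0 ≤ p n) (hsum : HasSum p 1) (hn₀ : 1 ≤ n₀) (hmax : ∀ n, p n ≤ p n₀)
    (hanti : ∀ m n, n₀ ≤ m → m ≤ n → p n ≤ p m) (ha : ∀ n, |a n| ≤ 1) (hε : 0 ≤ ε)
    (hdens : ∀ n : ℕ, |∑ j ∈ Icc 1 n, a j - α * n| ≤ ε * n + K) :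
    |∑' n, a n * p n - α| ≤ ε + (1 + |α| + 2 * ε + 2 * K) * (n₀ * p n₀) := by
  obtain ⟨s, rfl⟩ : ∃ s, n₀ = s + 1 := ⟨n₀ - 1, by omega⟩
  set c := p (s + 1)
  have hK : 0 ≤ K := by simpa using hdens 0
  have hc : c ≤ (s + 1 : ℕ) * c := le_mul_of_one_le_left (hp _) (by norm_cast)
  have hdev : HasSum (fun n => (a n - α) * p n) (∑' n, a n * p n - α) := by
    have hap : Summable fun n => a n * p n := hsum.summable.of_norm_bounded fun n => by
      rw [norm_mul, Real.norm_eq_abs, Real.norm_of_nonneg (hp n)]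
      exact mul_le_of_le_one_left (hp n) (ha n)
    simpa [sub_mul] using hap.hasSum.sub (hsum.mul_left α)
  rw [← hdev.tsum_eq, ← hdev.summable.sum_add_tsum_nat_add (s + 1)]
  have hhead : |∑ n ∈ range (s + 1), (a n - α) * p n| ≤ (1 + |α|) * ((s + 1 : ℕ) * c) := by
    calc _ ≤ ∑ n ∈ range (s + 1), (1 + |α|) * c :=
          (abs_sum_le_sum_abs _ _).trans <| sum_le_sum fun n _ => by
            rw [abs_mul, abs_of_nonneg (hp n)]
            exact mul_le_mul ((abs_sub _ _).trans (by linarith [ha n])) (hmax n) (hp n) (by positivity)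
      _ = _ := by rw [sum_const, card_range, nsmul_eq_mul]; ring
  have htail_mass : ∑' j, p (j + (s + 1)) ≤ 1 := by
    rw [← hsum.tsum_eq, ← hsum.summable.sum_add_tsum_nat_add (s + 1), le_add_iff_nonneg_left]
    exact sum_nonneg fun n _ => hp n
  have hwindow : ∀ t : ℕ, |∑ j ∈ range t, (a (j + (s + 1)) - α)| ≤ ε * t + 2 * (ε * s + K) := by
    intro t
    rw [sum_sub_distrib, sum_range_add_eq_sum_Icc_sub, sum_const, card_range, nsmul_eq_mul]
    have h1 := hdens (s + t)
    have h2 := hdens s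
    push_cast at h1
    calc _ = |(∑ j ∈ Icc 1 (s + t), a j - α * (s + t)) - (∑ j ∈ Icc 1 s, a j - α * s)| := by
          ring_nf
      _ ≤ _ := (abs_sub _ _).trans (by linarith)
  have htail := abs_tsum_mul_le_of_antitone (q := fun j => p (j + (s + 1)))
    (fun i j hij => hanti _ _ (by omega) (by omega)) (fun j => hp _)
    ((summable_nat_add_iff (s + 1)).2 hsum.summable)
    ((summable_nat_add_iff (s + 1)).2 hdev.summable) hwindow
  have hsc : (s : ℝ) * c ≤ (s + 1 : ℕ) * c :=
    mul_le_mul_of_nonneg_right (by push_cast; linarith) (hp _)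
  calc _ ≤ |∑ n ∈ range (s + 1), (a n - α) * p n|
        + |∑' j, (a (j + (s + 1)) - α) * p (j + (s + 1))| := abs_add_le _ _
    _ ≤ (1 + |α|) * ((s + 1 : ℕ) * c) + (ε * 1 + 2 * (ε * s + K) * c) := by
        refine add_le_add hhead (htail.trans (add_le_add ?_ (by simp [c])))
        exact mul_le_mul_of_nonneg_left htail_mass hε
    _ ≤ _ := by linarith [mul_le_mul_of_nonneg_left hsc hε, mul_le_mul_of_nonneg_left hc hK]

/-- Let `(P_k)` be probability distributions on the positive integers such that for
each `k` there is a mode `nk k ≥ 1` with `P_k` non-decreasing before it and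
non-increasing after it, and such that `P_k(m·nk k)/P_k(nk k) → 1` for every fixed
`m ≥ 1`.  Then `P_k(A) → α` for every set `A` of natural density `α`. -/
theorem stmt16 (P : ℕ → ℕ → ℝ)
    (hnonneg : ∀ k n, 0 ≤ P k n)
    (hzero : ∀ k, P k 0 = 0)
    (hsum : ∀ k, HasSum (P k) 1)
    (nk : ℕ → ℕ) (hnk : ∀ k, 1 ≤ nk k)
    (hmono₁ : ∀ k m n, 1 ≤ m → m ≤ n → n ≤ nk k → P k m ≤ P k n)
    (hmono₂ : ∀ k m n, nk k ≤ m → m ≤ n → P k n ≤ P k m)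
    (hratio : ∀ m : ℕ, 1 ≤ m →
      Tendsto (fun k => P k (m * nk k) / P k (nk k)) atTop (nhds 1))
    (A : Set ℕ) (α : ℝ)
    (hA : Tendsto (fun n : ℕ =>
        (∑ j ∈ Finset.Icc 1 n, Set.indicator A (fun _ => (1 : ℝ)) j) / n)
      atTop (nhds α)) :
    Tendsto (fun k => ∑' n, Set.indicator A (P k) n) atTop (nhds α) := by
  have hmax : ∀ k n, P k n ≤ P k (nk k) := by
    intro k n
    rcases Nat.eq_zero_or_pos n with rfl | hn
    · exact (hzero k).trans_le (hnonneg k _)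
    rcases le_total n (nk k) with h | h
    · exact hmono₁ k n (nk k) hn h le_rfl
    · exact hmono₂ k (nk k) n le_rfl h
  have hind : ∀ n, |Set.indicator A (fun _ => (1 : ℝ)) n| ≤ 1 := fun n => by
    by_cases h : n ∈ A <;> simp [h]
  rw [Metric.tendsto_nhds]
  intro ε hε
  obtain ⟨K, hK⟩ := exists_abs_sub_mul_le_of_tendsto_div hA (half_pos hε)
  have hsmall := (tendsto_mul_apply_of_tendsto_ratio hnonneg hsum hmono₂ hratio).const_mul
    (1 + |α| + 2 * (ε / 2) + 2 * K)
  rw [mul_zero] at hsmall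
  filter_upwards [hsmall.eventually_lt_const (half_pos hε)] with k hk
  have hdev := abs_tsum_mul_sub_le_of_unimodal (hnonneg k) (hsum k) (hnk k) (hmax k) (hmono₂ k)
    hind (half_pos hε).le hK
  simp only [← Set.indicator_mul_left, one_mul] at hdev
  rw [Real.dist_eq]
  linarith
end

section
/- Let E be a URI-set, and for n ≥ 1 order the elements of E ∩ {1,...,n} backwards as Y_1^{(n)} > Y_2^{(n)} > ... > Y_{|E_n|}^{(n)} = 1. Then Y_1^{(n)} is uniformly distributed in {1,...,n}, and conditionally on (Y_1^{(n)},...,Y_{i−1}^{(n)}) with Y_{i−1}^{(n)} > 1, the random variable Y_i^{(n)} is uniformly distributed in {1,...,Y_{i−1}^{(n)} − 1}. -/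
open MeasureTheory ProbabilityTheory
open scoped ENNReal

/-- The elements of `Es ∩ {1,…,n}` ordered backwards:
`backY Es n 1 > backY Es n 2 > …` (with `backY Es n 0 = n+1` as a sentinel), i.e.
`backY Es n i` is the `i`-th largest element of `Es ∩ {1,…,n}`. -/
noncomputable def backY (Es : Set ℕ) (n : ℕ) : ℕ → ℕ
  | 0 => n + 1
  | i + 1 => sSup {m | m < backY Es n i ∧ m ∈ Es}

/-!
The event `{Y₁ = y₁, …, Y_k = y_k}` says exactly which `m ∈ [y_k, n]` lie in `E`, namely the
`y_l`; by independence its probability is a product over `[y_k, n]`. Adding `Y_{k+1} = j` further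
prescribes `j ∈ E` and `E ∩ (j, y_k) = ∅`, which contributes the telescoping factor
`(1/j) ∏_{j<m<y_k} (1 - 1/m) = 1/(y_k - 1)`. The law of `Y₁` is the case `k = 0`, with the
sentinel `y₀ = n + 1`.
-/

lemma sSup_lt_and_mem_eq_iff {Es : Set ℕ} {a b : ℕ} (ha : 1 ≤ a) (hab : a < b) :
    sSup {m | m < b ∧ m ∈ Es} = a ↔ a ∈ Es ∧ ∀ m, a < m → m < b → m ∉ Es := by
  have hbdd : BddAbove {m | m < b ∧ m ∈ Es} := ⟨b, fun m hm => hm.1.le⟩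
  constructor
  · intro h
    have hne : {m | m < b ∧ m ∈ Es}.Nonempty := by
      by_contra hempty
      rw [Set.not_nonempty_iff_eq_empty.1 hempty, csSup_empty, Nat.bot_eq_zero] at h
      omega
    have hmem := h ▸ Nat.sSup_mem hne hbdd
    exact ⟨hmem.2, fun m ham hmb hm => (le_csSup hbdd ⟨hmb, hm⟩).not_gt (h ▸ ham)⟩
  · rintro ⟨haEs, hgap⟩
    refine IsGreatest.csSup_eq ⟨⟨hab, haEs⟩, fun m hm => ?_⟩
    by_contra! ham
    exact hgap m ham hm.1 hm.2

lemma backY_succ_eq_iff {Es : Set ℕ} {n k b j : ℕ} (hk : backY Es n k = b) (hj : 1 ≤ j)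
    (hjb : j < b) :
    backY Es n (k + 1) = j ↔ j ∈ Es ∧ ∀ m, j < m → m < b → m ∉ Es := by
  rw [backY, hk]
  exact sSup_lt_and_mem_eq_iff hj hjb

lemma forall_mem_Ico_iff_insert {Es T : Set ℕ} {a b c : ℕ} (hab : a < b) (hbc : b ≤ c)
    (hT : ∀ t ∈ T, b ≤ t) :
    ((∀ m ∈ Finset.Ico b c, m ∈ Es ↔ m ∈ T) ∧ a ∈ Es ∧ ∀ m, a < m → m < b → m ∉ Es) ↔
      ∀ m ∈ Finset.Ico a c, m ∈ Es ↔ m ∈ insert a T := by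
  have hmT : ∀ m, m < b → m ∉ T := fun m hmb hm => (hT m hm).not_gt hmb
  simp only [Finset.mem_Ico, Set.mem_insert_iff]
  constructor
  · rintro ⟨hpat, haEs, hgap⟩ m ⟨ham, hmc⟩
    rcases ham.eq_or_lt with rfl | ham
    · simp [haEs]
    rcases lt_or_ge m b with hmb | hbm
    · simp [hgap m ham hmb, ham.ne', hmT m hmb]
    · simp [hpat m ⟨hbm, hmc⟩, ham.ne']
  · intro hpat
    refine ⟨fun m ⟨hbm, hmc⟩ => ?_, (hpat a ⟨le_rfl, hab.trans_le hbc⟩).2 (Or.inl rfl),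
      fun m ham hmb hm => ?_⟩
    · simpa [(hab.trans_le hbm).ne'] using hpat m ⟨hab.le.trans hbm, hmc⟩
    · have := (hpat m ⟨ham.le, by omega⟩).1 hm
      exact hmT m hmb (this.resolve_left ham.ne')

lemma backY_eqOn_iff {Es : Set ℕ} {n k : ℕ} {y : ℕ → ℕ} (h0 : y 0 = n + 1)
    (hy : StrictAntiOn y (Set.Iic k)) (hk : 1 ≤ y k) :
    Set.EqOn (backY Es n) y (Set.Iic k) ↔
      ∀ m ∈ Finset.Ico (y k) (y 0), m ∈ Es ↔ m ∈ y '' Set.Iic k := by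
  induction k with
  | zero => simp [Set.EqOn, h0, backY]
  | succ k ih =>
    have hyk : y (k + 1) < y k := hy (by simp) (by simp) (Nat.lt_succ_self k)
    have hT : ∀ t ∈ y '' Set.Iic k, y k ≤ t := by
      rintro _ ⟨l, hl, rfl⟩
      exact hy.antitoneOn (Set.Iic_subset_Iic.2 k.le_succ hl) k.le_succ hl
    have hk0 : y k ≤ y 0 := hT _ ⟨0, by simp, rfl⟩
    rw [← Order.succ_eq_add_one, Order.Iic_succ, Set.image_insert_eq, Order.succ_eq_add_one,
      ← forall_mem_Ico_iff_insert hyk hk0 hT, ← ih (hy.mono (Set.Iic_subset_Iic.2 k.le_succ))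
      (by omega)]
    rw [Set.EqOn, Set.forall_mem_insert, and_comm]
    exact and_congr_right fun h => backY_succ_eq_iff (h k Set.self_mem_Iic) hk hyk

lemma setOf_mem_iff_eq_ite {ι Ω : Type*} (E : ι → Set Ω) (T : Set ι) (i : ι)
    [Decidable (i ∈ T)] :
    {ω | ω ∈ E i ↔ i ∈ T} = if i ∈ T then E i else (E i)ᶜ := by
  split_ifs with hi <;> simp [hi, Set.compl_def]

section Cylinder

variable {ι Ω : Type*} [MeasurableSpace Ω] {μ : Measure Ω} {E : ι → Set Ω}

lemma ProbabilityTheory.iIndepSet.measure_setOf_forall_mem_iff (hind : iIndepSet E μ)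
    (S : Finset ι) (T : Set ι) :
    μ {ω | ∀ i ∈ S, ω ∈ E i ↔ i ∈ T} = ∏ i ∈ S, μ {ω | ω ∈ E i ↔ i ∈ T} := by
  classical
  have hEi (i : ι) : MeasurableSet[MeasurableSpace.generateFrom {E i}] (E i) :=
    MeasurableSpace.measurableSet_generateFrom rfl
  rw [← (iIndepSet_iff E μ).1 hind S fun i _ => ?_]
  · congr 1
    ext ω
    simp
  · rw [setOf_mem_iff_eq_ite]
    split_ifs
    exacts [hEi i, (hEi i).compl]

lemma measurableSet_setOf_forall_mem_iff (hE : ∀ i, MeasurableSet (E i)) (S : Finset ι)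
    (T : Set ι) : MeasurableSet {ω | ∀ i ∈ S, ω ∈ E i ↔ i ∈ T} := by
  classical
  simp only [Set.ofPred_forall]
  refine Finset.measurableSet_biInter _ fun i _ => ?_
  rw [setOf_mem_iff_eq_ite]
  split_ifs
  exacts [hE i, (hE i).compl]

end Cylinder

section URISet

variable {Ω : Type*} [MeasurableSpace Ω] {μ : Measure Ω} [IsProbabilityMeasure μ]
  {E : ℕ → Set Ω}

lemma measure_setOf_mem_iff_ne_zero {m : ℕ} (hmeas : MeasurableSet (E m))
    (hprob : μ (E m) = 1 / m) (hm : 2 ≤ m) (P : Prop) : μ {ω | ω ∈ E m ↔ P} ≠ 0 := by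
  classical
  have hm_lt : 1 / (m : ℝ≥0∞) < 1 := by
    rw [one_div, ENNReal.inv_lt_one]
    exact_mod_cast hm
  by_cases hP : P
  · simp [hP, hprob]
  · simp only [hP, iff_false, ← Set.compl_def, prob_compl_eq_one_sub hmeas, hprob]
    exact (tsub_pos_of_lt hm_lt).ne'

lemma one_div_mul_one_sub_one_div_add_one {c : ℕ} (hc : c ≠ 0) :
    1 / (c : ℝ≥0∞) * (1 - 1 / (c + 1)) = 1 / (c + 1) := by
  have hc0 : (c : ℝ≥0∞) ≠ 0 := by exact_mod_cast hc
  have h1 : (1 : ℝ≥0∞) - 1 / (c + 1) = c / (c + 1) := by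
    rw [ENNReal.eq_div_iff (by simp) (by simp), ENNReal.mul_sub (by simp), mul_one, mul_one_div,
      ENNReal.div_self (by simp) (by simp), ENNReal.add_sub_cancel_right (by simp)]
  rw [h1, one_div, ← mul_div_assoc, ENNReal.inv_mul_cancel hc0 (by simp)]

lemma prod_measure_setOf_mem_iff_eq (hmeas : ∀ m, MeasurableSet (E m))
    (hprob : ∀ m, 1 ≤ m → μ (E m) = 1 / m) {j b : ℕ} (hj : 1 ≤ j) (hjb : j < b) :
    ∏ m ∈ Finset.Ico j b, μ {ω | ω ∈ E m ↔ m = j} = 1 / ((b : ℝ≥0∞) - 1) := by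
  rw [← Nat.cast_one, ← ENNReal.natCast_sub]
  induction b, hjb using Nat.le_induction with
  | base => simp [hprob j hj]
  | succ b hjb ih =>
    have hbj : b ≠ j := by omega
    rw [Finset.prod_Ico_succ_top (by omega), ih]
    simp only [hbj, iff_false, ← Set.compl_def, prob_compl_eq_one_sub (hmeas b),
      hprob b (by omega)]
    obtain ⟨c, rfl⟩ : ∃ c, b = c + 1 := ⟨b - 1, by omega⟩
    simpa using one_div_mul_one_sub_one_div_add_one (c := c) (by omega)

variable (hmeas : ∀ m, MeasurableSet (E m)) (hind : iIndepSet E μ)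
  (hprob : ∀ m, 1 ≤ m → μ (E m) = 1 / m) {n k : ℕ} {y : ℕ → ℕ}
include hmeas hind hprob

lemma cond_backY_succ_eq (h0 : y 0 = n + 1) (hy : StrictAntiOn y (Set.Iic k)) {j : ℕ}
    (hj : 1 ≤ j) (hjk : j < y k) :
    μ[|{ω | Set.EqOn (backY {m | ω ∈ E m} n) y (Set.Iic k)}]
        {ω | backY {m | ω ∈ E m} n (k + 1) = j} = 1 / ((y k : ℝ≥0∞) - 1) := by
  set T := y '' Set.Iic k
  have hT : ∀ t ∈ T, y k ≤ t := by
    rintro _ ⟨l, hl, rfl⟩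
    exact hy.antitoneOn hl Set.self_mem_Iic hl
  have hk0 : y k ≤ y 0 := hT _ ⟨0, by simp, rfl⟩
  have hA : {ω | Set.EqOn (backY {m | ω ∈ E m} n) y (Set.Iic k)}
      = {ω | ∀ m ∈ Finset.Ico (y k) (y 0), ω ∈ E m ↔ m ∈ T} :=
    Set.ext fun ω => backY_eqOn_iff h0 hy (by omega)
  have hAB : {ω | Set.EqOn (backY {m | ω ∈ E m} n) y (Set.Iic k)}
        ∩ {ω | backY {m | ω ∈ E m} n (k + 1) = j}
      = {ω | ∀ m ∈ Finset.Ico j (y 0), ω ∈ E m ↔ m ∈ insert j T} := by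
    ext ω
    exact (and_congr_right fun h => backY_succ_eq_iff (h Set.self_mem_Iic) hj hjk).trans
      (and_congr_left' (backY_eqOn_iff h0 hy (by omega))) |>.trans
      (forall_mem_Ico_iff_insert hjk hk0 hT)
  have hlow : ∏ m ∈ Finset.Ico j (y k), μ {ω | ω ∈ E m ↔ m ∈ insert j T}
      = 1 / ((y k : ℝ≥0∞) - 1) := by
    rw [← prod_measure_setOf_mem_iff_eq hmeas hprob hj hjk]
    refine Finset.prod_congr rfl fun m hm => ?_
    have hmT : m ∉ T := fun h => (hT m h).not_gt (Finset.mem_Ico.1 hm).2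
    simp only [Set.mem_insert_iff, hmT, or_false]
  have hhigh : ∏ m ∈ Finset.Ico (y k) (y 0), μ {ω | ω ∈ E m ↔ m ∈ insert j T}
      = ∏ m ∈ Finset.Ico (y k) (y 0), μ {ω | ω ∈ E m ↔ m ∈ T} := by
    refine Finset.prod_congr rfl fun m hm => ?_
    have hmj : m ≠ j := by simp only [Finset.mem_Ico] at hm; omega
    simp only [Set.mem_insert_iff, hmj, false_or]
  have hA0 : ∏ m ∈ Finset.Ico (y k) (y 0), μ {ω | ω ∈ E m ↔ m ∈ T} ≠ 0 := by
    refine Finset.prod_ne_zero_iff.2 fun m hm => ?_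
    simp only [Finset.mem_Ico] at hm
    exact measure_setOf_mem_iff_ne_zero (hmeas m) (hprob m (by omega)) (by omega) _
  rw [cond_apply (hA ▸ measurableSet_setOf_forall_mem_iff hmeas _ _), hAB, hA,
    hind.measure_setOf_forall_mem_iff, hind.measure_setOf_forall_mem_iff,
    ← Finset.prod_Ico_consecutive _ hjk.le hk0, hlow, hhigh, mul_left_comm,
    ENNReal.inv_mul_cancel hA0 (ENNReal.prod_ne_top fun _ _ => measure_ne_top _ _), mul_one]

end URISet

theorem stmt18_general {Ω : Type*} [MeasurableSpace Ω] (μ : Measure Ω) [IsProbabilityMeasure μ]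
    (E : ℕ → Set Ω) (hmeas : ∀ n, MeasurableSet (E n))
    (hind : iIndepSet E μ)
    (hprob : ∀ n : ℕ, 1 ≤ n → μ (E n) = 1 / n)
    (n : ℕ) :
    (∀ j : ℕ, 1 ≤ j → j ≤ n →
        μ {ω | backY {m | ω ∈ E m} n 1 = j} = 1 / n)
    ∧ ∀ i : ℕ, 2 ≤ i → ∀ y : ℕ → ℕ,
        y 1 ≤ n →
        (∀ l : ℕ, 1 ≤ l → l < i - 1 → y (l + 1) < y l) →
        1 < y (i - 1) →
        ∀ j : ℕ, 1 ≤ j → j ≤ y (i - 1) - 1 →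
          (μ[|{ω | ∀ l : ℕ, 1 ≤ l → l ≤ i - 1 → backY {m | ω ∈ E m} n l = y l}])
              {ω | backY {m | ω ∈ E m} n i = j}
            = 1 / ((y (i - 1) : ℝ≥0∞) - 1) := by
  refine ⟨fun j hj hjn => ?_, fun i hi y hy1 hy hyi j hj hjy => ?_⟩
  · have hA : {ω | Set.EqOn (backY {m | ω ∈ E m} n) (fun _ => n + 1) (Set.Iic 0)} = Set.univ :=
      Set.eq_univ_of_forall fun ω l hl => by rw [Nat.le_zero.1 hl]; rfl
    have := cond_backY_succ_eq hmeas hind hprob (y := fun _ => n + 1) rfl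
      (strictAntiOn_Iic_of_succ_lt fun l hl => absurd hl l.not_lt_zero) hj (Nat.lt_succ_of_le hjn)
    rwa [hA, cond_univ, Nat.cast_succ, ENNReal.add_sub_cancel_right ENNReal.one_ne_top] at this
  · obtain ⟨k, rfl⟩ : ∃ k, i = k + 1 := ⟨i - 1, by omega⟩
    rw [Nat.add_sub_cancel] at hy hyi hjy ⊢
    -- `y 0` is left free by the statement; put the sentinel `backY _ n 0 = n + 1` there.
    set y' := Function.update y 0 (n + 1)
    have hy'0 : y' 0 = n + 1 := Function.update_self ..
    have hy'y {l : ℕ} (hl : l ≠ 0) : y' l = y l := Function.update_of_ne hl ..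
    have hy' : StrictAntiOn y' (Set.Iic k) := strictAntiOn_Iic_of_succ_lt fun l hl => by
      rcases l with _ | l
      · simpa [hy'0, hy'y] using Nat.lt_succ_of_le hy1
      · simpa [hy'y] using hy (l + 1) (by omega) hl
    have hA : {ω | ∀ l, 1 ≤ l → l ≤ k → backY {m | ω ∈ E m} n l = y l}
        = {ω | Set.EqOn (backY {m | ω ∈ E m} n) y' (Set.Iic k)} := by
      ext ω
      refine ⟨fun h l hl => ?_, fun h l hl hlk => (h hlk).trans (hy'y (by omega))⟩
      rcases l with _ | l
      · exact hy'0.symm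
      · exact (h (l + 1) (by omega) hl).trans (hy'y (by omega)).symm
    rw [hA, cond_backY_succ_eq hmeas hind hprob hy'0 hy' hj (by rw [hy'y (by omega)]; omega),
      hy'y (by omega)]

/-- For a URI-set `E` and its elements in `{1,…,n}` ordered backwards
`Y_1 > Y_2 > …`: `Y_1` is uniform on `{1,…,n}`, and conditionally on
`(Y_1,…,Y_{i-1}) = (y_1,…,y_{i-1})` with `y_{i-1} > 1`, the variable `Y_i` is
uniform on `{1,…,y_{i-1}−1}`. -/
theorem stmt18 {Ω : Type*} [MeasurableSpace Ω] (μ : Measure Ω) [IsProbabilityMeasure μ]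
    (E : ℕ → Set Ω) (hmeas : ∀ n, MeasurableSet (E n))
    (hind : iIndepSet E μ)
    (hprob : ∀ n : ℕ, 1 ≤ n → μ (E n) = 1 / n)
    (hzero : E 0 = ∅)
    (n : ℕ) (hn : 1 ≤ n) :
    (∀ j : ℕ, 1 ≤ j → j ≤ n →
        μ {ω | backY {m | ω ∈ E m} n 1 = j} = 1 / n)
    ∧ ∀ i : ℕ, 2 ≤ i → ∀ y : ℕ → ℕ,
        y 1 ≤ n →
        (∀ l : ℕ, 1 ≤ l → l < i - 1 → y (l + 1) < y l) →
        1 < y (i - 1) →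
        ∀ j : ℕ, 1 ≤ j → j ≤ y (i - 1) - 1 →
          (μ[|{ω | ∀ l : ℕ, 1 ≤ l → l ≤ i - 1 → backY {m | ω ∈ E m} n l = y l}])
              {ω | backY {m | ω ∈ E m} n i = j}
            = 1 / ((y (i - 1) : ℝ≥0∞) - 1) :=
  stmt18_general μ E hmeas hind hprob n
end
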